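/- arXiv:2103.10227 — 7 statements merged into one kernel-verified Lean document; each statement's English description precedes it below -/
import Mathlib

section
/- Let t ≥ 0, let v₁, v₂, v₃ : ℝ → [0,∞) be functions, let A₁, A₂, A₃ ⊆ ℝ be sets and τ₁, τ₂, τ₃ : ℝ → [0,+∞] be functions such that A_i ∩ {ξ : t < τ_i(ξ) < +∞} = ∅ for each i ∈ {1,2,3}. For i ≠ j define B_{ij} = {ξ : t < τ_i(ξ) = τ_j(ξ) < +∞}, Ω_{ij} = (A_i ∩ A_j) ∪ B_{ij}, and G_{ij}(ξ) = |v_i − v_j|(ξ)·1_{Ω_{ij}}(ξ) + max(v_i, v_j)(ξ)·1_{Ω_{ij}ᶜ}(ξ). Then G₁₃(ξ) ≤ G₁₂(ξ) + G₂₃(ξ) for every ξ ∈ ℝ. -/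
open Set
open scoped ENNReal

noncomputable section

lemma abs_sub_le_max' (a b : ℝ) (ha : 0 ≤ a) (hb : 0 ≤ b) : |a - b| ≤ max a b := by
  rw [abs_sub_le_iff]
  exact ⟨by linarith [le_max_left a b], by linarith [le_max_right a b]⟩

/-- `G_{ij}(ξ) = |v_i − v_j|(ξ)·1_{Ω_{ij}}(ξ) + max(v_i, v_j)(ξ)·1_{Ω_{ij}ᶜ}(ξ)` where
`Ω_{ij} = (A_i ∩ A_j) ∪ {ξ : t < τ_i(ξ) = τ_j(ξ) < ∞}`. -/
def Gpair (t : ℝ) (vi vj : ℝ → ℝ) (Ai Aj : Set ℝ) (τi τj : ℝ → ℝ≥0∞) (ξ : ℝ) : ℝ :=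
  ((Ai ∩ Aj) ∪ {η | ENNReal.ofReal t < τi η ∧ τi η = τj η ∧ τj η < ⊤}).indicator
      (fun η => |vi η - vj η|) ξ
    + (((Ai ∩ Aj) ∪ {η | ENNReal.ofReal t < τi η ∧ τi η = τj η ∧ τj η < ⊤})ᶜ).indicator
      (fun η => max (vi η) (vj η)) ξ

/-- the pointwise triangle inequality `G₁₃ ≤ G₁₂ + G₂₃`, assuming each
`A_i` is disjoint from `{ξ : t < τ_i(ξ) < ∞}`. -/
theorem statement1 (t : ℝ) (ht : 0 ≤ t) (v₁ v₂ v₃ : ℝ → ℝ)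
    (hv₁ : ∀ ξ, 0 ≤ v₁ ξ) (hv₂ : ∀ ξ, 0 ≤ v₂ ξ) (hv₃ : ∀ ξ, 0 ≤ v₃ ξ)
    (A₁ A₂ A₃ : Set ℝ) (τ₁ τ₂ τ₃ : ℝ → ℝ≥0∞)
    (hd₁ : A₁ ∩ {ξ | ENNReal.ofReal t < τ₁ ξ ∧ τ₁ ξ < ⊤} = ∅)
    (hd₂ : A₂ ∩ {ξ | ENNReal.ofReal t < τ₂ ξ ∧ τ₂ ξ < ⊤} = ∅)
    (hd₃ : A₃ ∩ {ξ | ENNReal.ofReal t < τ₃ ξ ∧ τ₃ ξ < ⊤} = ∅) :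
    ∀ ξ : ℝ, Gpair t v₁ v₃ A₁ A₃ τ₁ τ₃ ξ ≤
      Gpair t v₁ v₂ A₁ A₂ τ₁ τ₂ ξ + Gpair t v₂ v₃ A₂ A₃ τ₂ τ₃ ξ := by
  intro ξ
  have hD₁ : ξ ∈ A₁ → ¬(ENNReal.ofReal t < τ₁ ξ ∧ τ₁ ξ < ⊤) := fun h hq =>
    Set.eq_empty_iff_forall_notMem.mp hd₁ ξ ⟨h, hq⟩
  have hD₂ : ξ ∈ A₂ → ¬(ENNReal.ofReal t < τ₂ ξ ∧ τ₂ ξ < ⊤) := fun h hq =>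
    Set.eq_empty_iff_forall_notMem.mp hd₂ ξ ⟨h, hq⟩
  have hD₃ : ξ ∈ A₃ → ¬(ENNReal.ofReal t < τ₃ ξ ∧ τ₃ ξ < ⊤) := fun h hq =>
    Set.eq_empty_iff_forall_notMem.mp hd₃ ξ ⟨h, hq⟩
  have h1 := hv₁ ξ; have h2 := hv₂ ξ; have h3 := hv₃ ξ
  have htri := abs_sub_le (v₁ ξ) (v₂ ξ) (v₃ ξ)
  have hm13 := abs_sub_le_max' (v₁ ξ) (v₃ ξ) h1 h3
  have hm23 := abs_sub_le_max' (v₂ ξ) (v₃ ξ) h2 h3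
  have hm12 := abs_sub_le_max' (v₁ ξ) (v₂ ξ) h1 h2
  have hv12 : v₁ ξ ≤ |v₁ ξ - v₂ ξ| + v₂ ξ := by
    cases abs_cases (v₁ ξ - v₂ ξ) with
    | inl h => linarith [h.1]
    | inr h => linarith [h.1]
  have hv32 : v₃ ξ ≤ |v₂ ξ - v₃ ξ| + v₂ ξ := by
    cases abs_cases (v₂ ξ - v₃ ξ) with
    | inl h => linarith [h.1]
    | inr h => linarith [h.1]
  by_cases h12 : ξ ∈ (A₁ ∩ A₂) ∪ {η | ENNReal.ofReal t < τ₁ η ∧ τ₁ η = τ₂ η ∧ τ₂ η < ⊤} <;>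
  by_cases h23 : ξ ∈ (A₂ ∩ A₃) ∪ {η | ENNReal.ofReal t < τ₂ η ∧ τ₂ η = τ₃ η ∧ τ₃ η < ⊤} <;>
  by_cases h13 : ξ ∈ (A₁ ∩ A₃) ∪ {η | ENNReal.ofReal t < τ₁ η ∧ τ₁ η = τ₃ η ∧ τ₃ η < ⊤} <;>
  simp only [Gpair]
  · -- all three in: |v₁-v₃| ≤ |v₁-v₂| + |v₂-v₃|
    rw [Set.indicator_of_mem h13, Set.indicator_of_mem h12, Set.indicator_of_mem h23,
        Set.indicator_of_notMem (Set.notMem_compl_iff.mpr h13), Set.indicator_of_notMem (Set.notMem_compl_iff.mpr h12), Set.indicator_of_notMem (Set.notMem_compl_iff.mpr h23)]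
    simp only [add_zero, zero_add]
    exact htri
  · -- h12, h23 but not h13: impossible
    exfalso
    rcases h12 with ⟨hA1, hA2⟩ | ⟨hq1, heq12, hfin2⟩ <;>
      rcases h23 with ⟨hA2', hA3⟩ | ⟨hq2, heq23, hfin3⟩
    · exact h13 (Or.inl ⟨hA1, hA3⟩)
    · exact hD₂ hA2 ⟨hq2, heq23 ▸ hfin3⟩
    · exact hD₂ hA2' ⟨heq12 ▸ hq1, heq12 ▸ hfin2⟩
    · exact h13 (Or.inr ⟨hq1, heq12.trans heq23, hfin3⟩)
  · -- h12, ¬h23, h13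
    rw [Set.indicator_of_mem h13, Set.indicator_of_mem h12, Set.indicator_of_notMem h23,
        Set.indicator_of_notMem (Set.notMem_compl_iff.mpr h13), Set.indicator_of_notMem (Set.notMem_compl_iff.mpr h12), Set.indicator_of_mem (Set.mem_compl h23)]
    simp only [add_zero, zero_add]
    linarith [le_max_right (v₂ ξ) (v₃ ξ)]
  · -- h12, ¬h23, ¬h13
    rw [Set.indicator_of_notMem h13, Set.indicator_of_mem h12, Set.indicator_of_notMem h23,
        Set.indicator_of_mem (Set.mem_compl h13), Set.indicator_of_notMem (Set.notMem_compl_iff.mpr h12), Set.indicator_of_mem (Set.mem_compl h23)]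
    simp only [add_zero, zero_add]
    rcases max_cases (v₁ ξ) (v₃ ξ) with ⟨h, _⟩ | ⟨h, _⟩ <;> rw [h]
    · linarith [le_max_left (v₂ ξ) (v₃ ξ)]
    · linarith [le_max_right (v₂ ξ) (v₃ ξ), abs_nonneg (v₁ ξ - v₂ ξ)]
  · -- ¬h12, h23, h13
    rw [Set.indicator_of_mem h13, Set.indicator_of_notMem h12, Set.indicator_of_mem h23,
        Set.indicator_of_notMem (Set.notMem_compl_iff.mpr h13), Set.indicator_of_mem (Set.mem_compl h12), Set.indicator_of_notMem (Set.notMem_compl_iff.mpr h23)]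
    simp only [add_zero, zero_add]
    linarith [le_max_left (v₁ ξ) (v₂ ξ)]
  · -- ¬h12, h23, ¬h13
    rw [Set.indicator_of_notMem h13, Set.indicator_of_notMem h12, Set.indicator_of_mem h23,
        Set.indicator_of_mem (Set.mem_compl h13), Set.indicator_of_mem (Set.mem_compl h12), Set.indicator_of_notMem (Set.notMem_compl_iff.mpr h23)]
    simp only [add_zero, zero_add]
    rcases max_cases (v₁ ξ) (v₃ ξ) with ⟨h, _⟩ | ⟨h, _⟩ <;> rw [h]
    · linarith [le_max_left (v₁ ξ) (v₂ ξ), abs_nonneg (v₂ ξ - v₃ ξ)]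
    · linarith [le_max_right (v₁ ξ) (v₂ ξ)]
  · -- ¬h12, ¬h23, h13
    rw [Set.indicator_of_mem h13, Set.indicator_of_notMem h12, Set.indicator_of_notMem h23,
        Set.indicator_of_notMem (Set.notMem_compl_iff.mpr h13), Set.indicator_of_mem (Set.mem_compl h12), Set.indicator_of_mem (Set.mem_compl h23)]
    simp only [add_zero, zero_add]
    calc |v₁ ξ - v₃ ξ| ≤ max (v₁ ξ) (v₃ ξ) := hm13
      _ ≤ max (v₁ ξ) (v₂ ξ) + max (v₂ ξ) (v₃ ξ) := by
          rcases max_cases (v₁ ξ) (v₃ ξ) with ⟨h, _⟩ | ⟨h, _⟩ <;> rw [h]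
          · linarith [le_max_left (v₁ ξ) (v₂ ξ), le_max_left (v₂ ξ) (v₃ ξ)]
          · linarith [le_max_left (v₁ ξ) (v₂ ξ), le_max_right (v₂ ξ) (v₃ ξ)]
  · -- none
    rw [Set.indicator_of_notMem h13, Set.indicator_of_notMem h12, Set.indicator_of_notMem h23,
        Set.indicator_of_mem (Set.mem_compl h13), Set.indicator_of_mem (Set.mem_compl h12), Set.indicator_of_mem (Set.mem_compl h23)]
    simp only [add_zero, zero_add]
    rcases max_cases (v₁ ξ) (v₃ ξ) with ⟨h, _⟩ | ⟨h, _⟩ <;> rw [h]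
    · linarith [le_max_left (v₁ ξ) (v₂ ξ), le_max_left (v₂ ξ) (v₃ ξ)]
    · linarith [le_max_left (v₁ ξ) (v₂ ξ), le_max_right (v₂ ξ) (v₃ ξ)]

end
end

section
/- Let X₁(t) and X₂(t) be the α-dissipative solutions of the Lagrangian system with initial data X₁(0), X₂(0) ∈ F. Then for every t ≥ 0, ‖G₁₂(·,t)‖_{L¹(ℝ)} ≤ ‖G₁₂(·,0)‖_{L¹(ℝ)} and ‖G₁₂(·,t)‖_{L²(ℝ)} ≤ ‖G₁₂(·,0)‖_{L²(ℝ)}; that is, the L¹ and L² norms of G₁₂ are non-increasing in time. -/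
/-!
For a.e. `ξ` the solution satisfies
`∂_ξV(ξ,t) = V₀'(ξ) (1 - α 1_{0 < τ(ξ) ≤ t})` and `∂_ξU(ξ,t) = U₀'(ξ) + ½ V₀'(ξ) w(t,ξ)`, where
`w(t,ξ) = ∫₀ᵗ (1 - α 1_{0 < τ(ξ) ≤ s}) ds ≥ min(t, τ(ξ))`. Since `y₀' V₀' = U₀'²`, the breaking
time `τ = -2y₀'/U₀'` is exactly when `U₀' + ½ V₀' τ = 0`, so `∂_ξU` stays nonnegative once `U₀' ≥ 0`
or once the point has broken. Hence `Ω₁₂(0) ⊆ Ω₁₂(t)`, and on `Ω₁₂(0)` both energy densities are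
damped by the same factor, while off it they can only decrease; so `G₁₂(·,t) ≤ G₁₂(·,0)` pointwise.
-/

open MeasureTheory Filter Set Real
open scoped ENNReal Classical

noncomputable section

/-- A Lagrangian quadruple `X = (y, U, H, V)` of real-valued functions on `ℝ`. -/
structure LagQuad where
  y : ℝ → ℝ
  U : ℝ → ℝ
  H : ℝ → ℝ
  V : ℝ → ℝ

/-- The real-valued `L^p` norm of a function `ℝ → ℝ` (Lebesgue measure). -/
def nrm (p : ℝ≥0∞) (f : ℝ → ℝ) : ℝ := (eLpNorm f p volume).toReal

/-- `f` is bounded and Lipschitz. -/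
def bddLip (f : ℝ → ℝ) : Prop := (∃ C, ∀ x, |f x| ≤ C) ∧ (∃ K, LipschitzWith K f)

/-- The set `F` of Lagrangian coordinates, for the dissipation parameter `α`. -/
def inF (α : ℝ) (X : LagQuad) : Prop :=
  bddLip (fun ξ => X.y ξ - ξ) ∧ bddLip X.U ∧ bddLip X.H ∧ bddLip X.V ∧
  (∀ᵐ (ξ : ℝ) ∂volume, 0 ≤ deriv X.y ξ) ∧ (∀ᵐ (ξ : ℝ) ∂volume, 0 ≤ deriv X.H ξ) ∧
  (∃ c > (0 : ℝ), ∀ᵐ (ξ : ℝ) ∂volume, c ≤ deriv X.y ξ + deriv X.H ξ) ∧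
  (∀ᵐ (ξ : ℝ) ∂volume, deriv X.y ξ * deriv X.V ξ = (deriv X.U ξ) ^ 2) ∧
  (∀ᵐ (ξ : ℝ) ∂volume, 0 ≤ deriv X.V ξ ∧ deriv X.V ξ ≤ deriv X.H ξ) ∧
  (α = 1 → ∀ᵐ (ξ : ℝ) ∂volume,
    (deriv X.y ξ = 0 → deriv X.V ξ = 0) ∧ (0 < deriv X.y ξ → deriv X.V ξ = deriv X.H ξ)) ∧
  (α < 1 → ∃ κ : ℝ → ℝ, (∀ ξ, κ ξ = 1 - α ∨ κ ξ = 1) ∧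
    (∀ᵐ (ξ : ℝ) ∂volume, deriv X.V ξ = κ ξ * deriv X.H ξ ∧ (deriv X.U ξ < 0 → κ ξ = 1)))

/-- The subset `F₀ = {X ∈ F : y + H = id}`. -/
def inF0 (α : ℝ) (X : LagQuad) : Prop := inF α X ∧ ∀ ξ, X.y ξ + X.H ξ = ξ

/-- The wave-breaking time `τ` of a Lagrangian quadruple. -/
def tauOf (X : LagQuad) (ξ : ℝ) : ℝ≥0∞ :=
  if deriv X.U ξ < 0 then ENNReal.ofReal (-2 * deriv X.y ξ / deriv X.U ξ)
  else if deriv X.U ξ = 0 ∧ deriv X.y ξ = 0 then 0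
  else ⊤

/-- `A = {ξ : U'(ξ) ≥ 0}`. -/
def Aset (X : LagQuad) : Set ℝ := {ξ | 0 ≤ deriv X.U ξ}

/-- `Ω(t) = (A₁ ∩ A₂) ∪ {ξ : t < τ₁(ξ) = τ₂(ξ) < ∞}`. -/
def OmegaT (τ₁ τ₂ : ℝ → ℝ≥0∞) (t : ℝ) (X₁ X₂ : LagQuad) : Set ℝ :=
  (Aset X₁ ∩ Aset X₂) ∪ {ξ | ENNReal.ofReal t < τ₁ ξ ∧ τ₁ ξ = τ₂ ξ ∧ τ₂ ξ < ⊤}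

/-- `G₁₂ = |V₁' − V₂'|·1_Ω + max(V₁',V₂')·1_{Ωᶜ}`. -/
def GfunT (τ₁ τ₂ : ℝ → ℝ≥0∞) (t : ℝ) (X₁ X₂ : LagQuad) (ξ : ℝ) : ℝ :=
  (OmegaT τ₁ τ₂ t X₁ X₂).indicator (fun η => |deriv X₁.V η - deriv X₂.V η|) ξ
    + ((OmegaT τ₁ τ₂ t X₁ X₂)ᶜ).indicator (fun η => max (deriv X₁.V η) (deriv X₂.V η)) ξ

/-- The Lagrangian distance, with wave-breaking times `τ₁, τ₂` and time parameter `t`. -/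
def ddT (τ₁ τ₂ : ℝ → ℝ≥0∞) (t : ℝ) (X₁ X₂ : LagQuad) : ℝ :=
  nrm ⊤ (fun ξ => X₁.y ξ - X₂.y ξ) + nrm ⊤ (fun ξ => X₁.U ξ - X₂.U ξ)
    + nrm 2 (fun ξ => deriv X₁.y ξ - deriv X₂.y ξ)
    + nrm 2 (fun ξ => deriv X₁.U ξ - deriv X₂.U ξ)
    + nrm ⊤ (fun ξ => X₁.H ξ - X₂.H ξ)
    + nrm 1 (GfunT τ₁ τ₂ t X₁ X₂) + nrm 2 (GfunT τ₁ τ₂ t X₁ X₂)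

/-- The metric `d` on `F`. -/
def dmet (X₁ X₂ : LagQuad) : ℝ := ddT (tauOf X₁) (tauOf X₂) 0 X₁ X₂

/-- The norm `‖X_A − X_B‖` (sum of the four sup-norms). -/
def xnorm (XA XB : LagQuad) : ℝ :=
  nrm ⊤ (fun ξ => XA.y ξ - XB.y ξ) + nrm ⊤ (fun ξ => XA.U ξ - XB.U ξ)
    + nrm ⊤ (fun ξ => XA.H ξ - XB.H ξ) + nrm ⊤ (fun ξ => XA.V ξ - XB.V ξ)

/-- The relabelling group `G`. -/
def inG (f : ℝ → ℝ) : Prop :=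
  Function.Bijective f ∧ bddLip (fun x => f x - x) ∧
    bddLip (fun x => Function.invFun f x - x) ∧
    MemLp (fun x => deriv f x - 1) 2 volume

/-- The relabelling action `X • f`. -/
def act (X : LagQuad) (f : ℝ → ℝ) : LagQuad :=
  ⟨fun ξ => X.y (f ξ), fun ξ => X.U (f ξ), fun ξ => X.H (f ξ), fun ξ => X.V (f ξ)⟩

/-- `Π(X) = X • (y + H)⁻¹`. -/
def PiMap (X : LagQuad) : LagQuad := act X (Function.invFun (fun ξ => X.y ξ + X.H ξ))

/-- `J(X_A, X_B) = inf_{f,g ∈ G} ( d(X_A, X_B•f) + d(X_A•g, X_B) )`. -/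
def Jmet (XA XB : LagQuad) : ℝ :=
  sInf {r | ∃ f g, inG f ∧ inG g ∧ r = dmet XA (act XB f) + dmet (act XA g) XB}

/-- `d_F`, the infimum over finite sequences in `F₀` joining `Π X_A` to `Π X_B`. -/
def dFmet (α : ℝ) (XA XB : LagQuad) : ℝ :=
  sInf {r | ∃ (N : ℕ) (Xs : ℕ → LagQuad), (∀ n ≤ N, inF0 α (Xs n)) ∧
    Xs 0 = PiMap XA ∧ Xs N = PiMap XB ∧
    r = ∑ n ∈ Finset.range N, Jmet (Xs (n + 1)) (Xs n)}

/-- The set of points that have experienced wave breaking by time `t`. -/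
def breakSet (X0 : LagQuad) (t : ℝ) : Set ℝ :=
  {η | 0 < tauOf X0 η ∧ tauOf X0 η ≤ ENNReal.ofReal t}

/-- `V(ξ,t) = ∫_{−∞}^ξ V₀'(η)(1 − α·1_{t ≥ τ(η) > 0}(η)) dη`. -/
def Vsol (α : ℝ) (X0 : LagQuad) (t : ℝ) (ξ : ℝ) : ℝ :=
  ∫ η in Set.Iio ξ,
    deriv X0.V η * (1 - α * (breakSet X0 t).indicator (fun _ => (1 : ℝ)) η)

/-- `U(ξ,t) = U₀(ξ) + ∫₀ᵗ (½ V(ξ,s) − ¼ V_∞(s)) ds`. -/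
def Usol (α : ℝ) (X0 : LagQuad) (t : ℝ) (ξ : ℝ) : ℝ :=
  X0.U ξ + ∫ s in (0:ℝ)..t,
    ((1 / 2) * Vsol α X0 s ξ - (1 / 4) * limUnder Filter.atTop (Vsol α X0 s))

/-- `y(ξ,t) = y₀(ξ) + ∫₀ᵗ U(ξ,s) ds`. -/
def ysol (α : ℝ) (X0 : LagQuad) (t : ℝ) (ξ : ℝ) : ℝ :=
  X0.y ξ + ∫ s in (0:ℝ)..t, Usol α X0 s ξ

/-- The α-dissipative solution of the Lagrangian system at time `t`. -/
def sol (α : ℝ) (X0 : LagQuad) (t : ℝ) : LagQuad :=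
  ⟨ysol α X0 t, Usol α X0 t, X0.H, Vsol α X0 t⟩

/-- The Eulerian velocity `u` of `M(X)`: `u(x) = U(ξ)` whenever `x = y(ξ)`. -/
def Mu (X : LagQuad) : ℝ → ℝ := fun x => X.U (Function.invFun X.y x)

/-- The Eulerian energy measure `μ = y_#(V' dξ)` of `M(X)`. -/
def Mmu (X : LagQuad) : Measure ℝ :=
  Measure.map X.y (volume.withDensity fun ξ => ENNReal.ofReal (deriv X.V ξ))

/-- The Eulerian past-energy measure `ν = y_#(H' dξ)` of `M(X)`. -/
def Mnu (X : LagQuad) : Measure ℝ :=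
  Measure.map X.y (volume.withDensity fun ξ => ENNReal.ofReal (deriv X.H ξ))

/-- The set `D` of Eulerian coordinates `(u, μ, ν)`. -/
def inD (α : ℝ) (u : ℝ → ℝ) (μ ν : Measure ℝ) : Prop :=
  (∃ C, ∀ x, |u x| ≤ C) ∧
  (∀ x y : ℝ, u y - u x = ∫ s in x..y, deriv u s) ∧
  MemLp (deriv u) 2 volume ∧
  IsFiniteMeasure μ ∧ IsFiniteMeasure ν ∧ μ ≤ ν ∧
  (μ.rnDeriv volume =ᵐ[volume] fun x => ENNReal.ofReal ((deriv u x) ^ 2)) ∧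
  (α = 1 → μ = volume.withDensity (fun x => ENNReal.ofReal ((deriv u x) ^ 2)) ∧
    ν.rnDeriv volume =ᵐ[volume] fun x => ENNReal.ofReal ((deriv u x) ^ 2)) ∧
  (α < 1 → ∃ k : ℝ → ℝ, (∀ x, k x = 1 ∨ k x = 1 - α) ∧
    (∀ x, deriv u x < 0 → k x = 1) ∧ μ = ν.withDensity (fun x => ENNReal.ofReal (k x)))

/-- `y(ξ) = sup { x : x + ν((−∞,x)) < ξ }` — the Lagrangian characteristic of `(u,μ,ν)`. -/
def yL (ν : Measure ℝ) (ξ : ℝ) : ℝ := sSup {x : ℝ | x + (ν (Set.Iio x)).toReal < ξ}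

/-- The mapping `L : D → F₀` from Eulerian to Lagrangian coordinates. -/
def Lmap (u : ℝ → ℝ) (μ ν : Measure ℝ) : LagQuad :=
  ⟨yL ν, fun ξ => u (yL ν ξ), fun ξ => ξ - yL ν ξ,
    fun ξ => ∫ η in Set.Iio ξ,
      deriv (fun ζ => ζ - yL ν ζ) η * (μ.rnDeriv ν (yL ν η)).toReal⟩

/-- The set `D_{0,M}` of Eulerian pairs `(u, μ)` with total energy at most `M`. -/
def inD0M (α M : ℝ) (u : ℝ → ℝ) (μ : Measure ℝ) : Prop :=
  (∃ C, ∀ x, |u x| ≤ C) ∧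
  (∀ x y : ℝ, u y - u x = ∫ s in x..y, deriv u s) ∧
  MemLp (deriv u) 2 volume ∧
  IsFiniteMeasure μ ∧
  (μ.rnDeriv volume =ᵐ[volume] fun x => ENNReal.ofReal ((deriv u x) ^ 2)) ∧
  (μ Set.univ).toReal ≤ M ∧
  (α = 1 → μ = volume.withDensity (fun x => ENNReal.ofReal ((deriv u x) ^ 2)))

/-- `J_D((u₁,μ₁),(u₂,μ₂)) = inf over admissible ν₁, ν₂ of d_D((u₁,μ₁,ν₁),(u₂,μ₂,ν₂))`. -/
def JD (α : ℝ) (u₁ : ℝ → ℝ) (μ₁ : Measure ℝ) (u₂ : ℝ → ℝ) (μ₂ : Measure ℝ) : ℝ :=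
  sInf {r | ∃ ν₁ ν₂ : Measure ℝ, inD α u₁ μ₁ ν₁ ∧ inD α u₂ μ₂ ν₂ ∧
    r = dFmet α (Lmap u₁ μ₁ ν₁) (Lmap u₂ μ₂ ν₂)}

/-- The Eulerian metric `d_M` on `D_{0,M}`. -/
def dMmet (α M : ℝ) (uA : ℝ → ℝ) (μA : Measure ℝ) (uB : ℝ → ℝ) (μB : Measure ℝ) : ℝ :=
  sInf {r | ∃ (N : ℕ) (us : ℕ → ℝ → ℝ) (μs : ℕ → Measure ℝ),
    (∀ n ≤ N, inD0M α M (us n) (μs n)) ∧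
    us 0 = uA ∧ μs 0 = μA ∧ us N = uB ∧ μs N = μB ∧
    r = ∑ n ∈ Finset.range N, JD α (us (n + 1)) (μs (n + 1)) (us n) (μs n)}

end

open Topology NNReal Function

theorem LipschitzWith.integrable_deriv_of_ae_nonneg {f : ℝ → ℝ} {K : ℝ≥0} {C : ℝ}
    (hf : LipschitzWith K f) (hC : ∀ x, |f x| ≤ C) (hnn : ∀ᵐ x, 0 ≤ deriv f x) :
    Integrable (deriv f) := by
  have hac (a b : ℝ) : AbsolutelyContinuousOnInterval f a b :=
    hf.lipschitzOnWith.absolutelyContinuousOnInterval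
  refine integrable_of_intervalIntegral_norm_bounded (2 * C) (l := atTop)
    (a := fun n : ℕ => -(n : ℝ)) (b := fun n => n) (fun n => ?_)
    (tendsto_neg_atTop_atBot.comp tendsto_natCast_atTop_atTop) tendsto_natCast_atTop_atTop
    (Eventually.of_forall fun n => ?_)
  · exact (hac _ _).intervalIntegrable_deriv.left
  · calc ∫ x in -(n : ℝ)..n, ‖deriv f x‖ = ∫ x in -(n : ℝ)..n, deriv f x :=
          intervalIntegral.integral_congr_ae
            (hnn.mono fun x hx _ => Real.norm_of_nonneg hx)
      _ = f n - f (-n) := (hac _ _).integral_deriv_eq_sub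
      _ ≤ 2 * C := by linarith [abs_le.1 (hC n), abs_le.1 (hC (-n))]

section Primitive

variable {E : Type*} [NormedAddCommGroup E] [NormedSpace ℝ E] {f : ℝ → E}

theorem MeasureTheory.Integrable.ae_hasDerivAt_integral_Iio [CompleteSpace E] (hf : Integrable f) :
    ∀ᵐ x, HasDerivAt (fun y => ∫ t in Iio y, f t) (f x) x := by
  have hsplit : (fun y => ∫ t in Iio y, f t) = fun y => (∫ t in Iic 0, f t) + ∫ t in 0..y, f t := by
    funext y
    rw [← integral_Iic_eq_integral_Iio,
      ← intervalIntegral.integral_Iic_sub_Iic hf.integrableOn hf.integrableOn, add_sub_cancel]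
  filter_upwards [LocallyIntegrable.ae_hasDerivAt_integral hf.locallyIntegrable] with x hx
  rw [hsplit]
  exact (hx 0).const_add _

theorem MeasureTheory.Integrable.tendsto_integral_Iio_atTop (hf : Integrable f) :
    Tendsto (fun y => ∫ t in Iio y, f t) atTop (𝓝 (∫ t, f t)) := by
  simpa [iUnion_Iio] using
    tendsto_setIntegral_of_monotone (fun _ => measurableSet_Iio) (fun _ _ => Iio_subset_Iio)
      hf.integrableOn

end Primitive

section Dominated

variable {μ : Measure ℝ} {g : ℝ → ℝ → ℝ} {h : ℝ → ℝ}

theorem integrable_uncurry_of_dominated (hg : Measurable (uncurry g))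
    (hh : Integrable h μ) (hdom : ∀ s η, |g s η| ≤ h η) (a b : ℝ) :
    Integrable (uncurry g) ((volume.restrict (Ioc a b)).prod μ) := by
  have hbound : Integrable (fun p : ℝ × ℝ => (1 : ℝ) * h p.2)
      ((volume.restrict (Ioc a b)).prod μ) :=
    (integrableOn_const (C := (1 : ℝ)) measure_Ioc_lt_top.ne).mul_prod hh
  exact hbound.mono' hg.aestronglyMeasurable
    (Eventually.of_forall fun p => by simpa [uncurry] using hdom p.1 p.2)

theorem intervalIntegrable_integral_of_dominated [SFinite μ] (hg : Measurable (uncurry g))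
    (hh : Integrable h μ) (hdom : ∀ s η, |g s η| ≤ h η) {a b : ℝ} (hab : a ≤ b) :
    IntervalIntegrable (fun s => ∫ η, g s η ∂μ) volume a b :=
  (intervalIntegrable_iff_integrableOn_Ioc_of_le hab).2
    (integrable_uncurry_of_dominated hg hh hdom a b).integral_prod_left

theorem intervalIntegral_integral_swap_of_dominated [SFinite μ] (hg : Measurable (uncurry g))
    (hh : Integrable h μ) (hdom : ∀ s η, |g s η| ≤ h η) {a b : ℝ} (hab : a ≤ b) :
    ∫ s in a..b, ∫ η, g s η ∂μ = ∫ η, (∫ s in a..b, g s η) ∂μ := by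
  simp only [intervalIntegral.integral_of_le hab]
  exact integral_integral_swap (integrable_uncurry_of_dominated hg hh hdom a b)

theorem integrable_intervalIntegral_of_dominated [SFinite μ] (hg : Measurable (uncurry g))
    (hh : Integrable h μ) (hdom : ∀ s η, |g s η| ≤ h η) {a b : ℝ} (hab : a ≤ b) :
    Integrable (fun η => ∫ s in a..b, g s η) μ := by
  simp only [intervalIntegral.integral_of_le hab]
  exact (integrable_uncurry_of_dominated hg hh hdom a b).integral_prod_right

end Dominated

noncomputable def dissipFactor (α : ℝ) (X : LagQuad) (t η : ℝ) : ℝ :=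
  1 - α * (breakSet X t).indicator (fun _ => (1 : ℝ)) η

/-- The `ξ`-derivative of `∫₀ᵗ V(ξ,s) ds` is `V₀'(ξ) * weightedTime α X t ξ`. -/
noncomputable def weightedTime (α : ℝ) (X : LagQuad) (t η : ℝ) : ℝ :=
  ∫ s in (0 : ℝ)..t, dissipFactor α X s η

section Lagrangian

variable {α : ℝ} {X : LagQuad} {t ξ : ℝ}

theorem Usol_zero (α : ℝ) (X : LagQuad) : Usol α X 0 = X.U := by
  funext ξ
  simp [Usol]

theorem measurable_tauOf (X : LagQuad) : Measurable (tauOf X) := by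
  unfold tauOf
  refine Measurable.ite (measurableSet_lt (measurable_deriv X.U) measurable_const) ?_
    (Measurable.ite ?_ measurable_const measurable_const)
  · exact ENNReal.measurable_ofReal.comp
      (((measurable_deriv X.y).const_mul (-2)).div (measurable_deriv X.U))
  · exact (measurable_deriv X.U (measurableSet_singleton 0)).inter
      (measurable_deriv X.y (measurableSet_singleton 0))

theorem measurable_dissipFactor (α : ℝ) (X : LagQuad) :
    Measurable (uncurry (dissipFactor α X)) := by
  have hbreak : MeasurableSet {p : ℝ × ℝ | p.2 ∈ breakSet X p.1} :=
    (measurableSet_lt measurable_const ((measurable_tauOf X).comp measurable_snd)).inter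
      (measurableSet_le ((measurable_tauOf X).comp measurable_snd)
        (ENNReal.measurable_ofReal.comp measurable_fst))
  exact measurable_const.sub ((measurable_const.indicator hbreak).const_mul α)

theorem dissipFactor_mem_Icc (hα : α ∈ Icc (0 : ℝ) 1) (X : LagQuad) (t η : ℝ) :
    dissipFactor α X t η ∈ Icc (0 : ℝ) 1 := by
  by_cases h : η ∈ breakSet X t <;>
    simp [dissipFactor, h, hα.1, hα.2]

theorem dissipFactor_of_notMem (h : ξ ∉ breakSet X t) : dissipFactor α X t ξ = 1 := by
  simp [dissipFactor, h]

theorem dissipFactor_congr {X₁ X₂ : LagQuad} (h : tauOf X₁ ξ = tauOf X₂ ξ) :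
    dissipFactor α X₁ t ξ = dissipFactor α X₂ t ξ := by
  have hiff : ξ ∈ breakSet X₁ t ↔ ξ ∈ breakSet X₂ t := by simp only [breakSet, mem_ofPred_eq, h]
  simp only [dissipFactor, Set.indicator_apply, hiff]

theorem notMem_breakSet_zero (X : LagQuad) (ξ : ℝ) : ξ ∉ breakSet X 0 := by
  simp [breakSet, pos_iff_ne_zero]

theorem notMem_breakSet_of_nonneg (h : 0 ≤ deriv X.U ξ) : ξ ∉ breakSet X t := by
  simp only [breakSet, tauOf, neg_mul, mem_ofPred_eq, not_lt.2 h, ↓reduceIte, not_and, not_le]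
  split_ifs <;> simp

theorem toReal_tauOf_of_neg (hy : 0 ≤ deriv X.y ξ) (hU : deriv X.U ξ < 0) :
    (tauOf X ξ).toReal = -2 * deriv X.y ξ / deriv X.U ξ := by
  rw [tauOf, if_pos hU, ENNReal.toReal_ofReal (div_nonneg_of_nonpos (by linarith) hU.le)]

theorem weightedTime_nonneg (hα : α ∈ Icc (0 : ℝ) 1) (ht : 0 ≤ t) :
    0 ≤ weightedTime α X t ξ :=
  intervalIntegral.integral_nonneg ht fun s _ => (dissipFactor_mem_Icc hα X s ξ).1

theorem toReal_tauOf_le_weightedTime (hα : α ∈ Icc (0 : ℝ) 1) (ht : 0 ≤ t)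
    (hτ : tauOf X ξ ≤ ENNReal.ofReal t) :
    (tauOf X ξ).toReal ≤ weightedTime α X t ξ := by
  set r := (tauOf X ξ).toReal
  have hrt : r ≤ t := by
    simpa [ENNReal.toReal_ofReal ht] using ENNReal.toReal_mono ENNReal.ofReal_ne_top hτ
  have hint (a b : ℝ) : IntervalIntegrable (fun s => dissipFactor α X s ξ) volume a b :=
    (intervalIntegrable_const (c := (1 : ℝ))).mono_fun
      ((measurable_dissipFactor α X).comp
        (measurable_id.prodMk measurable_const)).aestronglyMeasurable
      (Eventually.of_forall fun s => by
        have h := dissipFactor_mem_Icc hα X s ξ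
        simp [abs_of_nonneg h.1, h.2])
  have hbefore : ∀ s ∈ Ioo 0 r, (1 : ℝ) ≤ dissipFactor α X s ξ := fun s hs => by
    refine (dissipFactor_of_notMem fun hmem => ?_).ge
    have := ENNReal.toReal_mono ENNReal.ofReal_ne_top hmem.2
    rw [ENNReal.toReal_ofReal hs.1.le] at this
    exact hs.2.not_ge this
  calc r = ∫ _ in (0 : ℝ)..r, (1 : ℝ) := by simp
    _ ≤ ∫ s in (0 : ℝ)..r, dissipFactor α X s ξ :=
        intervalIntegral.integral_mono_on_of_le_Ioo ENNReal.toReal_nonneg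
          intervalIntegrable_const (hint _ _) hbefore
    _ ≤ (∫ s in (0 : ℝ)..r, dissipFactor α X s ξ) + ∫ s in r..t, dissipFactor α X s ξ :=
        le_add_of_nonneg_right
          (intervalIntegral.integral_nonneg hrt fun s _ => (dissipFactor_mem_Icc hα X s ξ).1)
    _ = weightedTime α X t ξ :=
        intervalIntegral.integral_add_adjacent_intervals (hint _ _) (hint _ _)

/-- With `y = y₀'`, `u = U₀'` and `v = V₀'`, the time `-2y/u` is the breaking time `τ`, at which
`U₀' + ½ V₀' τ` vanishes. -/
theorem add_half_mul_nonneg_of_ne_zero {y u v w : ℝ} (hv : 0 ≤ v)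
    (hyv : y * v = u ^ 2) (hu : u ≠ 0) (hw : -2 * y / u ≤ w) : 0 ≤ u + 1 / 2 * (v * w) := by
  have hbreak : v * (-2 * y / u) = -2 * u := by
    rw [mul_comm v, div_mul_eq_mul_div, mul_assoc, hyv]
    field_simp
  nlinarith [mul_le_mul_of_nonneg_left hw hv]

theorem abs_deriv_V_mul_dissipFactor_le (hα : α ∈ Icc (0 : ℝ) 1) (X : LagQuad) (s η : ℝ) :
    |deriv X.V η * dissipFactor α X s η| ≤ |deriv X.V η| := by
  have h := dissipFactor_mem_Icc hα X s η
  rw [abs_mul, abs_of_nonneg h.1]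
  exact mul_le_of_le_one_right (abs_nonneg _) h.2

theorem measurable_deriv_V_mul_dissipFactor (α : ℝ) (X : LagQuad) :
    Measurable (uncurry fun s η => deriv X.V η * dissipFactor α X s η) :=
  ((measurable_deriv X.V).comp measurable_snd).mul (measurable_dissipFactor α X)

theorem deriv_Vsol_ae (hα : α ∈ Icc (0 : ℝ) 1) (hV : Integrable (deriv X.V)) (t : ℝ) :
    ∀ᵐ ξ, deriv (Vsol α X t) ξ = deriv X.V ξ * dissipFactor α X t ξ := by
  have hint : Integrable fun η => deriv X.V η * dissipFactor α X t η :=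
    hV.abs.mono' ((measurable_deriv_V_mul_dissipFactor α X).comp
      (measurable_const.prodMk measurable_id)).aestronglyMeasurable
      (Eventually.of_forall (abs_deriv_V_mul_dissipFactor_le hα X t))
  filter_upwards [hint.ae_hasDerivAt_integral_Iio] with ξ hξ
  exact hξ.deriv

theorem deriv_Usol_ae (hα : α ∈ Icc (0 : ℝ) 1) (hV : Integrable (deriv X.V))
    (hU : ∀ᵐ ξ, DifferentiableAt ℝ X.U ξ) (ht : 0 ≤ t) :
    ∀ᵐ ξ, deriv (Usol α X t) ξ = deriv X.U ξ + 1 / 2 * (deriv X.V ξ * weightedTime α X t ξ) := by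
  set g : ℝ → ℝ → ℝ := fun s η => deriv X.V η * dissipFactor α X s η
  have hg := measurable_deriv_V_mul_dissipFactor α X
  have hdom := abs_deriv_V_mul_dissipFactor_le hα X
  have hlim (s : ℝ) : limUnder atTop (Vsol α X s) = ∫ η, g s η :=
    (Integrable.tendsto_integral_Iio_atTop (hV.abs.mono'
      (hg.comp (measurable_const.prodMk measurable_id)).aestronglyMeasurable
      (Eventually.of_forall (hdom s)))).limUnder_eq
  have hVint (ξ : ℝ) : IntervalIntegrable (fun s => Vsol α X s ξ) volume 0 t :=
    intervalIntegrable_integral_of_dominated hg hV.abs.restrict hdom ht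
  have hLint : IntervalIntegrable (fun s => ∫ η, g s η) volume 0 t :=
    intervalIntegrable_integral_of_dominated hg hV.abs hdom ht
  have hswap (ξ : ℝ) : ∫ s in (0 : ℝ)..t, Vsol α X s ξ = ∫ η in Iio ξ, ∫ s in (0 : ℝ)..t, g s η :=
    intervalIntegral_integral_swap_of_dominated hg hV.abs.restrict hdom ht
  have hrepr : Usol α X t = fun ξ => X.U ξ + ((1 / 2) * (∫ η in Iio ξ, ∫ s in (0 : ℝ)..t, g s η)
      - (1 / 4) * ∫ s in (0 : ℝ)..t, ∫ η, g s η) := by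
    funext ξ
    simp only [Usol, hlim]
    rw [intervalIntegral.integral_sub ((hVint ξ).const_mul _) (hLint.const_mul _),
      intervalIntegral.integral_const_mul, intervalIntegral.integral_const_mul, hswap]
  have hWint := integrable_intervalIntegral_of_dominated hg hV.abs hdom ht
  filter_upwards [hWint.ae_hasDerivAt_integral_Iio, hU] with ξ hW hUξ
  have hD : HasDerivAt (Usol α X t) (deriv X.U ξ + 1 / 2 * ∫ s in (0 : ℝ)..t, g s ξ) ξ := by
    rw [hrepr]
    exact hUξ.hasDerivAt.add ((hW.const_mul _).sub_const _)
  rw [hD.deriv, weightedTime, ← intervalIntegral.integral_const_mul (deriv X.V ξ)]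

end Lagrangian

section Gfun

variable {τ₁ τ₂ : ℝ → ℝ≥0∞} {t ξ : ℝ} {Y₁ Y₂ : LagQuad}

theorem GfunT_of_mem (h : ξ ∈ OmegaT τ₁ τ₂ t Y₁ Y₂) :
    GfunT τ₁ τ₂ t Y₁ Y₂ ξ = |deriv Y₁.V ξ - deriv Y₂.V ξ| := by
  simp [GfunT, h]

theorem GfunT_of_notMem (h : ξ ∉ OmegaT τ₁ τ₂ t Y₁ Y₂) :
    GfunT τ₁ τ₂ t Y₁ Y₂ ξ = max (deriv Y₁.V ξ) (deriv Y₂.V ξ) := by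
  simp [GfunT, h]

theorem GfunT_nonneg (h : 0 ≤ deriv Y₁.V ξ) : 0 ≤ GfunT τ₁ τ₂ t Y₁ Y₂ ξ := by
  by_cases hξ : ξ ∈ OmegaT τ₁ τ₂ t Y₁ Y₂
  · exact (GfunT_of_mem hξ).symm ▸ abs_nonneg _
  · exact (GfunT_of_notMem hξ).symm ▸ le_max_of_le_left h

theorem GfunT_le_max (h₁ : 0 ≤ deriv Y₁.V ξ) (h₂ : 0 ≤ deriv Y₂.V ξ) :
    GfunT τ₁ τ₂ t Y₁ Y₂ ξ ≤ max (deriv Y₁.V ξ) (deriv Y₂.V ξ) := by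
  by_cases hξ : ξ ∈ OmegaT τ₁ τ₂ t Y₁ Y₂
  · rw [GfunT_of_mem hξ]
    exact abs_sub_le_iff.2 ⟨(sub_le_self _ h₂).trans (le_max_left _ _),
      (sub_le_self _ h₁).trans (le_max_right _ _)⟩
  · exact (GfunT_of_notMem hξ).le

end Gfun

structure RegularPoint (α : ℝ) (X : LagQuad) (t ξ : ℝ) : Prop where
  deriv_Vsol : deriv (Vsol α X t) ξ = deriv X.V ξ * dissipFactor α X t ξ
  deriv_Vsol_zero : deriv (Vsol α X 0) ξ = deriv X.V ξ
  deriv_Usol : deriv (Usol α X t) ξ = deriv X.U ξ + 1 / 2 * (deriv X.V ξ * weightedTime α X t ξ)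
  deriv_y_nonneg : 0 ≤ deriv X.y ξ
  deriv_V_nonneg : 0 ≤ deriv X.V ξ
  deriv_y_mul_deriv_V : deriv X.y ξ * deriv X.V ξ = deriv X.U ξ ^ 2

section RegularPoint

variable {α t ξ : ℝ} {X X₁ X₂ : LagQuad}

theorem ae_regularPoint (hα : α ∈ Icc (0 : ℝ) 1) (hX : inF α X) (ht : 0 ≤ t) :
    ∀ᵐ ξ, RegularPoint α X t ξ := by
  obtain ⟨-, ⟨-, K, hK⟩, -, ⟨⟨C, hC⟩, L, hL⟩, hy, -, -, hyV, hV, -⟩ := hX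
  have hVint := hL.integrable_deriv_of_ae_nonneg hC (hV.mono fun _ h => h.1)
  filter_upwards [deriv_Vsol_ae hα hVint t, deriv_Vsol_ae hα hVint 0,
    deriv_Usol_ae hα hVint hK.ae_differentiableAt ht, hy, hyV, hV] with ξ hVt hV0 hU hyξ hyVξ hVξ
  refine ⟨hVt, ?_, hU, hyξ, hVξ.1, hyVξ⟩
  rw [hV0, dissipFactor_of_notMem (notMem_breakSet_zero X ξ), mul_one]

theorem RegularPoint.deriv_Vsol_nonneg (hp : RegularPoint α X t ξ) (hα : α ∈ Icc (0 : ℝ) 1) :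
    0 ≤ deriv (Vsol α X t) ξ :=
  hp.deriv_Vsol ▸ mul_nonneg hp.deriv_V_nonneg (dissipFactor_mem_Icc hα X t ξ).1

theorem RegularPoint.deriv_Vsol_le (hp : RegularPoint α X t ξ) (hα : α ∈ Icc (0 : ℝ) 1) :
    deriv (Vsol α X t) ξ ≤ deriv X.V ξ :=
  hp.deriv_Vsol ▸ mul_le_of_le_one_right hp.deriv_V_nonneg (dissipFactor_mem_Icc hα X t ξ).2

theorem RegularPoint.deriv_Usol_nonneg (hp : RegularPoint α X t ξ) (hα : α ∈ Icc (0 : ℝ) 1)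
    (ht : 0 ≤ t) (h : 0 ≤ deriv X.U ξ ∨ tauOf X ξ ≤ ENNReal.ofReal t) :
    0 ≤ deriv (Usol α X t) ξ := by
  rw [hp.deriv_Usol]
  rcases le_or_gt 0 (deriv X.U ξ) with hU | hU
  · exact add_nonneg hU
      (mul_nonneg (by norm_num) (mul_nonneg hp.deriv_V_nonneg (weightedTime_nonneg hα ht)))
  · refine add_half_mul_nonneg_of_ne_zero hp.deriv_V_nonneg hp.deriv_y_mul_deriv_V hU.ne ?_
    rw [← toReal_tauOf_of_neg hp.deriv_y_nonneg hU]
    exact toReal_tauOf_le_weightedTime hα ht (h.resolve_left hU.not_ge)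

theorem mem_OmegaT_sol_of_mem_zero (hp₁ : RegularPoint α X₁ t ξ) (hp₂ : RegularPoint α X₂ t ξ)
    (hα : α ∈ Icc (0 : ℝ) 1) (ht : 0 ≤ t)
    (h : ξ ∈ OmegaT (tauOf X₁) (tauOf X₂) 0 (sol α X₁ 0) (sol α X₂ 0)) :
    ξ ∈ OmegaT (tauOf X₁) (tauOf X₂) t (sol α X₁ t) (sol α X₂ t) ∧
      dissipFactor α X₁ t ξ = dissipFactor α X₂ t ξ := by
  simp only [OmegaT, Aset, sol, Usol_zero, mem_union, mem_inter_iff, mem_ofPred_eq] at h ⊢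
  rcases h with ⟨hU₁, hU₂⟩ | ⟨-, hτ, hτtop⟩
  · refine ⟨Or.inl ⟨hp₁.deriv_Usol_nonneg hα ht (Or.inl hU₁),
      hp₂.deriv_Usol_nonneg hα ht (Or.inl hU₂)⟩, ?_⟩
    rw [dissipFactor_of_notMem (notMem_breakSet_of_nonneg hU₁),
      dissipFactor_of_notMem (notMem_breakSet_of_nonneg hU₂)]
  · refine ⟨?_, dissipFactor_congr hτ⟩
    by_cases hbr : tauOf X₁ ξ ≤ ENNReal.ofReal t
    · exact Or.inl ⟨hp₁.deriv_Usol_nonneg hα ht (Or.inr hbr),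
        hp₂.deriv_Usol_nonneg hα ht (Or.inr (hτ ▸ hbr))⟩
    · exact Or.inr ⟨not_le.1 hbr, hτ, hτtop⟩

theorem GfunT_sol_le (hp₁ : RegularPoint α X₁ t ξ) (hp₂ : RegularPoint α X₂ t ξ)
    (hα : α ∈ Icc (0 : ℝ) 1) (ht : 0 ≤ t) :
    GfunT (tauOf X₁) (tauOf X₂) t (sol α X₁ t) (sol α X₂ t) ξ ≤
      GfunT (tauOf X₁) (tauOf X₂) 0 (sol α X₁ 0) (sol α X₂ 0) ξ := by
  by_cases h0 : ξ ∈ OmegaT (tauOf X₁) (tauOf X₂) 0 (sol α X₁ 0) (sol α X₂ 0)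
  · obtain ⟨hmem, hfac⟩ := mem_OmegaT_sol_of_mem_zero hp₁ hp₂ hα ht h0
    have hc := dissipFactor_mem_Icc hα X₂ t ξ
    rw [GfunT_of_mem h0, GfunT_of_mem hmem]
    simp only [sol]
    rw [hp₁.deriv_Vsol, hp₂.deriv_Vsol, hfac, hp₁.deriv_Vsol_zero, hp₂.deriv_Vsol_zero, ← sub_mul,
      abs_mul, abs_of_nonneg hc.1]
    exact mul_le_of_le_one_right (abs_nonneg _) hc.2
  · refine (GfunT_le_max (hp₁.deriv_Vsol_nonneg hα) (hp₂.deriv_Vsol_nonneg hα)).trans ?_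
    rw [GfunT_of_notMem h0]
    simp only [sol]
    rw [hp₁.deriv_Vsol_zero, hp₂.deriv_Vsol_zero]
    exact max_le_max (hp₁.deriv_Vsol_le hα) (hp₂.deriv_Vsol_le hα)

end RegularPoint

/-- the `L¹` and `L²` norms of `G₁₂` are non-increasing in time:
`‖G₁₂(·,t)‖_{L¹} ≤ ‖G₁₂(·,0)‖_{L¹}` and `‖G₁₂(·,t)‖_{L²} ≤ ‖G₁₂(·,0)‖_{L²}`. -/
theorem statement4 (α : ℝ) (hα : α ∈ Set.Icc (0 : ℝ) 1)
    (X₁ X₂ : LagQuad) (h₁ : inF α X₁) (h₂ : inF α X₂)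
    (t : ℝ) (ht : 0 ≤ t) :
    eLpNorm (GfunT (tauOf X₁) (tauOf X₂) t (sol α X₁ t) (sol α X₂ t)) 1 volume ≤
        eLpNorm (GfunT (tauOf X₁) (tauOf X₂) 0 (sol α X₁ 0) (sol α X₂ 0)) 1 volume ∧
      eLpNorm (GfunT (tauOf X₁) (tauOf X₂) t (sol α X₁ t) (sol α X₂ t)) 2 volume ≤
        eLpNorm (GfunT (tauOf X₁) (tauOf X₂) 0 (sol α X₁ 0) (sol α X₂ 0)) 2 volume := by
  have hG : ∀ᵐ ξ, ‖GfunT (tauOf X₁) (tauOf X₂) t (sol α X₁ t) (sol α X₂ t) ξ‖ ≤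
      ‖GfunT (tauOf X₁) (tauOf X₂) 0 (sol α X₁ 0) (sol α X₂ 0) ξ‖ := by
    filter_upwards [ae_regularPoint hα h₁ ht, ae_regularPoint hα h₂ ht] with ξ hp₁ hp₂
    have hle := GfunT_sol_le hp₁ hp₂ hα ht
    have hnn : 0 ≤ GfunT (tauOf X₁) (tauOf X₂) t (sol α X₁ t) (sol α X₂ t) ξ :=
      GfunT_nonneg (hp₁.deriv_Vsol_nonneg hα)
    rwa [Real.norm_of_nonneg hnn, Real.norm_of_nonneg (hnn.trans hle)]
  exact ⟨eLpNorm_mono_ae hG, eLpNorm_mono_ae hG⟩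
end

section
/- Let f, h : ℝ → ℝ be increasing homeomorphisms such that f − id, f⁻¹ − id, h − id, h⁻¹ − id are bounded and Lipschitz, and set w = h ∘ f⁻¹. Let y_A, y_B : ℝ → ℝ be such that y_A − id and y_B − id are bounded and Lipschitz. Then ‖(y_A∘f)' − (y_B∘h)'‖_{L²(ℝ)}² ≤ ‖f'‖_{L∞}·‖y_A' − (y_B∘w)'‖_{L²(ℝ)}², where the derivatives are taken almost everywhere. -/
/-!
Off a null set the chain rule gives `(y_A ∘ f)' - (y_B ∘ h)' = (D ∘ f) · f'` with
`D = y_A' - (y_B ∘ h ∘ f⁻¹)'`; the exceptional sets are null because the Lipschitz map `f⁻¹` sends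
null sets to null sets. Bounding one factor `|f'|` by `‖f'‖_∞` and substituting `η = f ξ` in
`∫ |D ∘ f|² |f'|` gives the estimate. Since `(f⁻¹)' ∘ f · f' = 1` a.e., the same substitution
also bounds `∫ |D|²` by a multiple of `∫ |(D ∘ f) · f'|²`, so the left side is infinite whenever
the right one is; this matters because the real-valued `nrm` is `0` on infinite norms.
-/

open MeasureTheory
open scoped ENNReal

noncomputable section

open scoped NNReal

open Function

lemma LipschitzWith.of_sub_id {K : ℝ≥0} {f : ℝ → ℝ} (h : LipschitzWith K fun x => f x - x) :
    LipschitzWith (K + 1) f := by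
  simpa using h.add LipschitzWith.id

lemma exists_lipschitzWith_of_bddLip_sub_id {f : ℝ → ℝ} (h : bddLip fun x => f x - x) :
    ∃ K, LipschitzWith K f := by
  obtain ⟨K, hK⟩ := h.2
  exact ⟨K + 1, hK.of_sub_id⟩

lemma LipschitzWith.enorm_deriv_le {K : ℝ≥0} {f : ℝ → ℝ} (hf : LipschitzWith K f) (x : ℝ) :
    ‖deriv f x‖ₑ ≤ K := by
  rw [enorm_eq_nnnorm, ENNReal.coe_le_coe, ← NNReal.coe_le_coe, coe_nnnorm]
  exact norm_deriv_le_of_lipschitz hf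

lemma LipschitzWith.eLpNorm_deriv_top_le {K : ℝ≥0} {f : ℝ → ℝ} (hf : LipschitzWith K f)
    (μ : Measure ℝ) : eLpNorm (deriv f) ⊤ μ ≤ K := by
  rw [eLpNorm_exponent_top]
  exact eLpNormEssSup_le_of_ae_enorm_bound (ae_of_all _ hf.enorm_deriv_le)

lemma LipschitzWith.volume_image_eq_zero {K : ℝ≥0} {g : ℝ → ℝ} (hg : LipschitzWith K g)
    {s : Set ℝ} (hs : volume s = 0) : volume (g '' s) = 0 := by
  simpa [hs, hausdorffMeasure_real] using hg.hausdorffMeasure_image_le zero_le_one s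

lemma quasiMeasurePreserving_of_lipschitzWith_leftInverse {K : ℝ≥0} {f g : ℝ → ℝ}
    (hf : Measurable f) (hg : LipschitzWith K g) (hgf : LeftInverse g f) :
    Measure.QuasiMeasurePreserving f volume volume := by
  refine ⟨hf, Measure.AbsolutelyContinuous.mk fun s hs hs0 => ?_⟩
  rw [Measure.map_apply hf hs]
  have hsub : f ⁻¹' s ⊆ g '' s := fun x hx => ⟨f x, hx, hgf x⟩
  exact measure_mono_null hsub (hg.volume_image_eq_zero hs0)

lemma ae_deriv_comp_eq {μ ν : Measure ℝ} {f u : ℝ → ℝ}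
    (hf : ∀ᵐ x ∂μ, DifferentiableAt ℝ f x) (hfq : Measure.QuasiMeasurePreserving f μ ν)
    (hu : ∀ᵐ y ∂ν, DifferentiableAt ℝ u y) :
    ∀ᵐ x ∂μ, deriv (fun y => u (f y)) x = deriv u (f x) * deriv f x := by
  filter_upwards [hf, hfq.ae hu] with x hfx hux
  exact (hux.hasDerivAt.comp x hfx.hasDerivAt).deriv

lemma lintegral_eq_lintegral_enorm_deriv_mul_comp {K : ℝ≥0} {f : ℝ → ℝ}
    (hf : LipschitzWith K f) (hbij : Bijective f) (G : ℝ → ℝ≥0∞) :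
    ∫⁻ y, G y = ∫⁻ x, ‖deriv f x‖ₑ * G (f x) := by
  set s := {x | DifferentiableAt ℝ f x}
  have hs : volume sᶜ = 0 := ae_iff.1 hf.ae_differentiableAt
  have hfs : volume (f '' s)ᶜ = 0 := by
    refine measure_mono_null (fun y hy => ?_) (hf.volume_image_eq_zero hs)
    obtain ⟨x, rfl⟩ := hbij.2 y
    exact ⟨x, fun hx => hy ⟨x, hx, rfl⟩, rfl⟩
  have hcov := lintegral_image_eq_lintegral_abs_deriv_mul
    (measurableSet_of_differentiableAt ℝ f) (fun x hx => hx.hasDerivAt.hasDerivWithinAt)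
    hbij.1.injOn G
  rw [Measure.restrict_eq_self_of_ae_mem (mem_ae_iff.2 hfs : ∀ᵐ y, y ∈ f '' s),
    Measure.restrict_eq_self_of_ae_mem (mem_ae_iff.2 hs : ∀ᵐ x, x ∈ s)] at hcov
  simpa only [Real.enorm_eq_ofReal_abs] using hcov

lemma lintegral_enorm_comp_mul_deriv_sq_le {K : ℝ≥0} {f : ℝ → ℝ} (hf : LipschitzWith K f)
    (hbij : Bijective f) (D : ℝ → ℝ) :
    ∫⁻ x, ‖D (f x) * deriv f x‖ₑ ^ 2 ≤ eLpNorm (deriv f) ⊤ volume * ∫⁻ y, ‖D y‖ₑ ^ 2 := by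
  have hc : eLpNorm (deriv f) ⊤ volume ≠ ⊤ :=
    ne_top_of_le_ne_top ENNReal.coe_ne_top (hf.eLpNorm_deriv_top_le volume)
  rw [lintegral_eq_lintegral_enorm_deriv_mul_comp hf hbij fun y => ‖D y‖ₑ ^ 2,
    ← lintegral_const_mul' _ _ hc]
  refine lintegral_mono_ae ?_
  filter_upwards [eLpNorm_exponent_top (f := deriv f) ▸ ae_le_eLpNormEssSup] with x hx
  calc ‖D (f x) * deriv f x‖ₑ ^ 2 = ‖deriv f x‖ₑ * (‖deriv f x‖ₑ * ‖D (f x)‖ₑ ^ 2) := by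
        rw [enorm_mul]; ring
    _ ≤ _ := by gcongr

lemma lintegral_enorm_sq_le_mul_lintegral_enorm_comp_mul_deriv_sq {Kf Kg : ℝ≥0} {f g : ℝ → ℝ}
    (hf : LipschitzWith Kf f) (hg : LipschitzWith Kg g) (hgf : LeftInverse g f)
    (hsurj : Surjective f) (D : ℝ → ℝ) :
    ∫⁻ y, ‖D y‖ₑ ^ 2 ≤ Kg * ∫⁻ x, ‖D (f x) * deriv f x‖ₑ ^ 2 := by
  have hgf' : ∀ᵐ x, ‖deriv g (f x)‖ₑ * ‖deriv f x‖ₑ = 1 := by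
    filter_upwards [ae_deriv_comp_eq hf.ae_differentiableAt
      (quasiMeasurePreserving_of_lipschitzWith_leftInverse hf.continuous.measurable hg hgf)
      hg.ae_differentiableAt] with x hx
    rw [← enorm_mul, ← hx, show (fun x => g (f x)) = id from hgf.id, deriv_id, enorm_one]
  rw [lintegral_eq_lintegral_enorm_deriv_mul_comp hf ⟨hgf.injective, hsurj⟩ fun y => ‖D y‖ₑ ^ 2,
    ← lintegral_const_mul' _ _ ENNReal.coe_ne_top]
  refine lintegral_mono_ae ?_
  filter_upwards [hgf'] with x hx
  calc ‖deriv f x‖ₑ * ‖D (f x)‖ₑ ^ 2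
      = (‖deriv g (f x)‖ₑ * ‖deriv f x‖ₑ) * (‖deriv f x‖ₑ * ‖D (f x)‖ₑ ^ 2) := by
        rw [hx, one_mul]
    _ = ‖deriv g (f x)‖ₑ * ‖D (f x) * deriv f x‖ₑ ^ 2 := by rw [enorm_mul]; ring
    _ ≤ Kg * ‖D (f x) * deriv f x‖ₑ ^ 2 := by gcongr; exact hg.enorm_deriv_le _

lemma ENNReal.toReal_le_toReal_mul_of_le_mul {a b c k : ℝ≥0∞} (hc : c ≠ ⊤) (hk : k ≠ ⊤)
    (hab : a ≤ c * b) (hba : b ≤ k * a) : a.toReal ≤ c.toReal * b.toReal := by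
  rcases eq_or_ne b ⊤ with rfl | hb
  · have ha : a = ⊤ := by
      by_contra ha
      exact ENNReal.mul_ne_top hk ha (top_le_iff.1 hba)
    simp [ha]
  · rw [← ENNReal.toReal_mul]
    exact ENNReal.toReal_mono (ENNReal.mul_ne_top hc hb) hab

lemma nrm_two_sq (g : ℝ → ℝ) : nrm 2 g ^ 2 = (∫⁻ x, ‖g x‖ₑ ^ 2).toReal := by
  have := eLpNorm_nnreal_pow_eq_lintegral (f := g) (μ := volume) (p := 2) two_ne_zero
  norm_cast at this
  rw [nrm, ← ENNReal.toReal_pow]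
  exact_mod_cast congrArg ENNReal.toReal this

theorem statement9_general (f h : ℝ → ℝ)
    (hfbij : Function.Bijective f)
    (hf : bddLip fun x => f x - x) (hfi : bddLip fun x => Function.invFun f x - x)
    (hh : bddLip fun x => h x - x)
    (yA yB : ℝ → ℝ)
    (hyA : bddLip fun x => yA x - x) (hyB : bddLip fun x => yB x - x) :
    nrm 2 (fun ξ => deriv (fun x => yA (f x)) ξ - deriv (fun x => yB (h x)) ξ) ^ 2 ≤
      nrm ⊤ (deriv f) *
        nrm 2 (fun ξ => deriv yA ξ
          - deriv (fun x => yB (h (Function.invFun f x))) ξ) ^ 2 := by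
  obtain ⟨Kf, hfl⟩ := exists_lipschitzWith_of_bddLip_sub_id hf
  obtain ⟨Ki, hil⟩ := exists_lipschitzWith_of_bddLip_sub_id hfi
  obtain ⟨Kh, hhl⟩ := exists_lipschitzWith_of_bddLip_sub_id hh
  obtain ⟨KA, hAl⟩ := exists_lipschitzWith_of_bddLip_sub_id hyA
  obtain ⟨KB, hBl⟩ := exists_lipschitzWith_of_bddLip_sub_id hyB
  set yBw := fun x => yB (h (invFun f x))
  have hinv : LeftInverse (invFun f) f := leftInverse_invFun hfbij.1
  have hfq := quasiMeasurePreserving_of_lipschitzWith_leftInverse hfl.continuous.measurable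
    hil hinv
  have hchain : ∀ᵐ ξ, deriv (fun x => yA (f x)) ξ - deriv (fun x => yB (h x)) ξ =
      (deriv yA (f ξ) - deriv yBw (f ξ)) * deriv f ξ := by
    have hyBw : (fun x => yB (h x)) = fun x => yBw (f x) := funext fun x => by simp [yBw, hinv x]
    filter_upwards [ae_deriv_comp_eq hfl.ae_differentiableAt hfq hAl.ae_differentiableAt,
      ae_deriv_comp_eq (u := yBw) hfl.ae_differentiableAt hfq
        (hBl.comp (hhl.comp hil)).ae_differentiableAt] with ξ hA hyBw'
    rw [hyBw, hA, hyBw', sub_mul]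
  rw [nrm_two_sq, nrm_two_sq, lintegral_congr_ae (hchain.mono fun ξ hξ => by rw [hξ])]
  exact ENNReal.toReal_le_toReal_mul_of_le_mul
    (ne_top_of_le_ne_top ENNReal.coe_ne_top (hfl.eLpNorm_deriv_top_le volume))
    ENNReal.coe_ne_top (lintegral_enorm_comp_mul_deriv_sq_le hfl hfbij _)
    (lintegral_enorm_sq_le_mul_lintegral_enorm_comp_mul_deriv_sq hfl hil hinv hfbij.2 _)

/-- for increasing homeomorphisms `f, h` of `ℝ` with `f − id`, `f⁻¹ − id`,
`h − id`, `h⁻¹ − id` bounded and Lipschitz, `w = h ∘ f⁻¹`, and `y_A − id`, `y_B − id`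
bounded and Lipschitz, one has
`‖(y_A∘f)' − (y_B∘h)'‖_{L²}² ≤ ‖f'‖_{L∞} · ‖y_A' − (y_B∘w)'‖_{L²}²`. -/
theorem statement9 (f h : ℝ → ℝ)
    (hfmono : StrictMono f) (hfbij : Function.Bijective f)
    (hhmono : StrictMono h) (hhbij : Function.Bijective h)
    (hf : bddLip fun x => f x - x) (hfi : bddLip fun x => Function.invFun f x - x)
    (hh : bddLip fun x => h x - x) (hhi : bddLip fun x => Function.invFun h x - x)
    (yA yB : ℝ → ℝ)
    (hyA : bddLip fun x => yA x - x) (hyB : bddLip fun x => yB x - x) :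
    nrm 2 (fun ξ => deriv (fun x => yA (f x)) ξ - deriv (fun x => yB (h x)) ξ) ^ 2 ≤
      nrm ⊤ (deriv f) *
        nrm 2 (fun ξ => deriv yA ξ
          - deriv (fun x => yB (h (Function.invFun f x))) ξ) ^ 2 :=
  statement9_general f h hfbij hf hfi hh yA yB hyA hyB

end
end

section
/- Let X_A, X_B ∈ F, let f, h ∈ G, set w = h ∘ f⁻¹ ∈ G, and let C ≥ 1 satisfy ‖f'‖_{L∞}^{1/2} ≤ C. Then d(X_A • f, X_B • h) ≤ C·d(X_A, X_B • w). -/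
open MeasureTheory Filter Set Real
open scoped ENNReal Classical

/-!
Relabelling by an increasing bi-Lipschitz bijection `f` multiplies every derivative by
`f' > 0` almost everywhere, with no regularity needed on the relabelled functions. Hence the
wave-breaking times and the set `Ω` are transported by `f`, and `G` for the relabelled pair is
`(G ∘ f) · f'`. By the change of variables `∫ (φ ∘ f) f' = ∫ φ`, the sup norms and the `L¹` norm
of `G` are unchanged, while every `L²` norm of a function `(φ ∘ f) · f'` is at most
`‖f'‖_∞^{1/2} ‖φ‖_{L²}`. Since `X_B • h = (X_B • w) • f`, this gives the bound with any `C ≥ 1`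
dominating `‖f'‖_∞^{1/2}`.
-/

open MeasureTheory Filter Set Function
open scoped ENNReal NNReal

theorem LipschitzWith.volume_image_null {K : ℝ≥0} {φ : ℝ → ℝ} (hφ : LipschitzWith K φ)
    {s : Set ℝ} (hs : volume s = 0) : volume (φ '' s) = 0 := by
  have h := hφ.hausdorffMeasure_image_le zero_le_one s
  rwa [hausdorffMeasure_real, hs, mul_zero, nonpos_iff_eq_zero] at h

theorem LipschitzWith.quasiMeasurePreserving_of_leftInverse {K : ℝ≥0} {f g : ℝ → ℝ}
    (hf : Continuous f) (hg : LipschitzWith K g) (hgf : LeftInverse g f) :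
    Measure.QuasiMeasurePreserving f volume volume where
  measurable := hf.measurable
  absolutelyContinuous := Measure.AbsolutelyContinuous.mk fun s hs hs0 => by
    rw [Measure.map_apply hf.measurable hs]
    exact measure_mono_null (fun x hx => (⟨f x, hx, hgf x⟩ : x ∈ g '' s))
      (hg.volume_image_null hs0)

theorem eLpNorm_top_comp_le {α β E : Type*} [MeasurableSpace α] [MeasurableSpace β]
    [NormedAddCommGroup E] {μ : Measure α} {ν : Measure β} {f : α → β}
    (hf : Measure.QuasiMeasurePreserving f μ ν) (φ : β → E) :
    eLpNorm (φ ∘ f) ⊤ μ ≤ eLpNorm φ ⊤ ν := by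
  rw [eLpNorm_exponent_top, eLpNorm_exponent_top]
  exact essSup_le_of_ae_le _ (hf.ae (enorm_ae_le_eLpNormEssSup φ ν))

theorem eLpNorm_top_comp_eq {α β E : Type*} [MeasurableSpace α] [MeasurableSpace β]
    [NormedAddCommGroup E] {μ : Measure α} {ν : Measure β} {f : α → β} {g : β → α}
    (hf : Measure.QuasiMeasurePreserving f μ ν) (hg : Measure.QuasiMeasurePreserving g ν μ)
    (hfg : RightInverse g f) (φ : β → E) :
    eLpNorm (φ ∘ f) ⊤ μ = eLpNorm φ ⊤ ν := by
  refine le_antisymm (eLpNorm_top_comp_le hf φ) ?_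
  simpa [comp_assoc, hfg.comp_eq_id] using eLpNorm_top_comp_le hg (φ ∘ f)

theorem LipschitzWith.eLpNormEssSup_deriv_ne_top {K : ℝ≥0} {f : ℝ → ℝ}
    (hf : LipschitzWith K f) : eLpNormEssSup (deriv f) volume ≠ ⊤ :=
  ne_top_of_le_ne_top ENNReal.coe_ne_top <| eLpNormEssSup_le_of_ae_nnnorm_bound <|
    ae_of_all _ fun _ => by exact_mod_cast norm_deriv_le_of_lipschitz hf

theorem eLpNorm_two_le_of_lintegral_sq_le {α E : Type*} [MeasurableSpace α] {μ : Measure α}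
    [NormedAddCommGroup E] {u v : α → E} {c : ℝ≥0∞}
    (h : ∫⁻ x, ‖u x‖ₑ ^ 2 ∂μ ≤ c * ∫⁻ x, ‖v x‖ₑ ^ 2 ∂μ) :
    eLpNorm u 2 μ ≤ c ^ (2⁻¹ : ℝ) * eLpNorm v 2 μ := by
  simp only [eLpNorm_eq_lintegral_rpow_enorm_toReal two_ne_zero ENNReal.ofNat_ne_top,
    ENNReal.toReal_ofNat, ENNReal.rpow_two, one_div]
  rw [← ENNReal.mul_rpow_of_nonneg _ _ (by norm_num)]
  gcongr

theorem ENNReal.toReal_le_mul_toReal {a b : ℝ≥0∞} {c : ℝ} (hc : 0 ≤ c)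
    (hab : a ≤ ENNReal.ofReal c * b) (hba : b = ⊤ → a = ⊤) : a.toReal ≤ c * b.toReal := by
  rcases eq_or_ne b ⊤ with hb | hb
  · simp [hb, hba hb]
  · simpa [ENNReal.toReal_mul, hc] using
      ENNReal.toReal_mono (ENNReal.mul_ne_top ENNReal.ofReal_ne_top hb) hab

theorem deriv_comp_of_hasDerivAt_of_leftInverse {f g φ : ℝ → ℝ} {f' x : ℝ}
    (hf : HasDerivAt f f' x) (hf' : f' ≠ 0) (hg : ContinuousAt g (f x))
    (hgf : g (f x) = x) (hfg : RightInverse g f) :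
    deriv (fun ξ => φ (f ξ)) x = deriv φ (f x) * f' := by
  by_cases hφ : DifferentiableAt ℝ φ (f x)
  · exact (hφ.hasDerivAt.comp x hf).deriv
  -- otherwise `φ ∘ f` is not differentiable at `x` either (compose with the differentiable
  -- inverse `g`), and both sides are `0`
  have hφf : ¬ DifferentiableAt ℝ (fun ξ => φ (f ξ)) x := by
    intro hφf
    rw [← hgf] at hf hφf
    have hg' : HasDerivAt g f'⁻¹ (f x) :=
      HasDerivAt.of_local_left_inverse hg hf hf' (Eventually.of_forall hfg)
    have hcomp := hφf.hasDerivAt.comp (f x) hg'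
    exact hφ (by simpa [comp_def, hfg _] using hcomp.differentiableAt)
  rw [deriv_zero_of_not_differentiableAt hφ, deriv_zero_of_not_differentiableAt hφf, zero_mul]

theorem Monotone.of_continuous_injective_of_bounded_sub_id {f : ℝ → ℝ} (hc : Continuous f)
    (hinj : Injective f) {B : ℝ} (hB : ∀ x, |f x - x| ≤ B) : Monotone f := by
  refine StrictMono.monotone <| (hc.strictMono_of_inj hinj).resolve_right fun hanti => ?_
  have h0 : 0 ≤ |f 0| + B + 1 := by linarith [abs_nonneg (f 0), (abs_nonneg _).trans (hB 0)]
  have h1 := hanti.antitone h0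
  have h2 := (abs_le.mp (hB (|f 0| + B + 1))).1
  linarith [le_abs_self (f 0)]

theorem lintegral_deriv_mul_comp {K : ℝ≥0} {f : ℝ → ℝ} (hf : LipschitzWith K f)
    (hmono : Monotone f) (hsurj : Surjective f) (u : ℝ → ℝ≥0∞) :
    ∫⁻ x, ENNReal.ofReal (deriv f x) * u (f x) = ∫⁻ y, u y := by
  set s := {x | DifferentiableAt ℝ f x}
  have hs : ∀ᵐ x, x ∈ s := hf.ae_differentiableAt
  have himage : ∀ᵐ y, y ∈ f '' s := by
    refine measure_mono_null (fun y hy => ?_) (hf.volume_image_null (ae_iff.mp hs))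
    obtain ⟨x, rfl⟩ := hsurj y
    exact ⟨x, fun hx => hy ⟨x, hx, rfl⟩, rfl⟩
  have hcov := lintegral_image_eq_lintegral_deriv_mul_of_monotoneOn
    (measurableSet_of_differentiableAt ℝ f)
    (fun x hx => (DifferentiableAt.hasDerivAt hx).hasDerivWithinAt) (hmono.monotoneOn s) u
  rwa [Measure.restrict_eq_self_of_ae_mem hs, Measure.restrict_eq_self_of_ae_mem himage,
    eq_comm] at hcov

section Relabelling

variable {f : ℝ → ℝ} {x : ℝ}

theorem tauOf_act {X : LagQuad} (hd : 0 < deriv f x)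
    (hchain : ∀ φ : ℝ → ℝ, deriv (fun ξ => φ (f ξ)) x = deriv φ (f x) * deriv f x) :
    tauOf (act X f) x = tauOf X (f x) := by
  have hneg (a : ℝ) : a * deriv f x < 0 ↔ a < 0 := by
    rw [← not_le, mul_nonneg_iff_of_pos_right hd, not_le]
  simp only [tauOf, act, hchain, hneg, mul_eq_zero, hd.ne', or_false,
    ← mul_assoc, mul_div_mul_right _ _ hd.ne']

theorem mem_OmegaT_act_iff {X₁ X₂ : LagQuad} (hd : 0 < deriv f x)
    (hchain : ∀ φ : ℝ → ℝ, deriv (fun ξ => φ (f ξ)) x = deriv φ (f x) * deriv f x) :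
    x ∈ OmegaT (tauOf (act X₁ f)) (tauOf (act X₂ f)) 0 (act X₁ f) (act X₂ f)
      ↔ f x ∈ OmegaT (tauOf X₁) (tauOf X₂) 0 X₁ X₂ := by
  simp only [OmegaT, Aset, mem_union, mem_inter_iff, mem_ofPred_eq, tauOf_act hd hchain]
  simp only [act, hchain, mul_nonneg_iff_of_pos_right hd]

theorem GfunT_act {X₁ X₂ : LagQuad} (hd : 0 < deriv f x)
    (hchain : ∀ φ : ℝ → ℝ, deriv (fun ξ => φ (f ξ)) x = deriv φ (f x) * deriv f x) :
    GfunT (tauOf (act X₁ f)) (tauOf (act X₂ f)) 0 (act X₁ f) (act X₂ f) x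
      = GfunT (tauOf X₁) (tauOf X₂) 0 X₁ X₂ (f x) * deriv f x := by
  simp only [GfunT, indicator_apply, mem_compl_iff, mem_OmegaT_act_iff hd hchain]
  split_ifs
  · simp only [act, hchain, ← sub_mul, abs_mul, abs_of_pos hd, add_zero]
  · simp only [act, hchain, max_mul_of_nonneg _ _ hd.le, zero_add]

end Relabelling

structure IncreasingBiLipschitz (f g : ℝ → ℝ) (Kf Kg : ℝ≥0) : Prop where
  leftInverse : LeftInverse g f
  rightInverse : RightInverse g f
  lipschitz : LipschitzWith Kf f
  lipschitz_inv : LipschitzWith Kg g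
  monotone : Monotone f

namespace IncreasingBiLipschitz

variable {f g : ℝ → ℝ} {Kf Kg : ℝ≥0}

theorem eLpNorm_top_comp (hf : IncreasingBiLipschitz f g Kf Kg) (φ : ℝ → ℝ) :
    eLpNorm (fun x => φ (f x)) ⊤ volume = eLpNorm φ ⊤ volume :=
  eLpNorm_top_comp_eq
    (hf.lipschitz_inv.quasiMeasurePreserving_of_leftInverse hf.lipschitz.continuous
      hf.leftInverse)
    (hf.lipschitz.quasiMeasurePreserving_of_leftInverse hf.lipschitz_inv.continuous
      hf.rightInverse)
    hf.rightInverse φ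

theorem nrm_top_comp (hf : IncreasingBiLipschitz f g Kf Kg) (φ : ℝ → ℝ) :
    nrm ⊤ (fun x => φ (f x)) = nrm ⊤ φ := by
  rw [nrm, nrm, hf.eLpNorm_top_comp]

theorem lipschitz_inv_pos (hf : IncreasingBiLipschitz f g Kf Kg) : 0 < Kg := by
  refine pos_iff_ne_zero.mpr fun hK => ?_
  have h := hf.lipschitz_inv.dist_le_mul (f 0) (f 1)
  rw [hf.leftInverse, hf.leftInverse, hK] at h
  norm_num at h

theorem monotone_sub_inv_mul_id (hf : IncreasingBiLipschitz f g Kf Kg) :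
    Monotone fun x => f x - (Kg : ℝ)⁻¹ * x := by
  intro x y hxy
  have hK : (0 : ℝ) < Kg := hf.lipschitz_inv_pos
  have h := hf.lipschitz_inv.dist_le_mul (f y) (f x)
  rw [hf.leftInverse, hf.leftInverse, Real.dist_eq, Real.dist_eq,
    abs_of_nonneg (sub_nonneg.mpr hxy), abs_of_nonneg (sub_nonneg.mpr (hf.monotone hxy))] at h
  have hslope : (Kg : ℝ)⁻¹ * (y - x) ≤ f y - f x := by
    rw [inv_mul_le_iff₀ hK]; exact h
  linarith

theorem inv_le_deriv (hf : IncreasingBiLipschitz f g Kf Kg) {x : ℝ}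
    (hx : DifferentiableAt ℝ f x) : (Kg : ℝ)⁻¹ ≤ deriv f x := by
  have h := hf.monotone_sub_inv_mul_id.deriv_nonneg (x := x)
  rw [(hx.hasDerivAt.fun_sub ((hasDerivAt_id' x).const_mul (Kg : ℝ)⁻¹)).deriv] at h
  linarith

theorem ae_deriv_pos_and_deriv_comp (hf : IncreasingBiLipschitz f g Kf Kg) :
    ∀ᵐ x, 0 < deriv f x ∧
      ∀ φ : ℝ → ℝ, deriv (fun ξ => φ (f ξ)) x = deriv φ (f x) * deriv f x := by
  filter_upwards [hf.lipschitz.ae_differentiableAt] with x hx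
  have hpos : 0 < deriv f x :=
    (inv_pos.mpr (NNReal.coe_pos.mpr hf.lipschitz_inv_pos)).trans_le (hf.inv_le_deriv hx)
  exact ⟨hpos, fun φ => deriv_comp_of_hasDerivAt_of_leftInverse hx.hasDerivAt hpos.ne'
    hf.lipschitz_inv.continuous.continuousAt (hf.leftInverse x) hf.rightInverse⟩

theorem lintegral_comp (hf : IncreasingBiLipschitz f g Kf Kg) (u : ℝ → ℝ≥0∞) :
    ∫⁻ x, ENNReal.ofReal (deriv f x) * u (f x) = ∫⁻ y, u y :=
  lintegral_deriv_mul_comp hf.lipschitz hf.monotone hf.rightInverse.surjective u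

theorem enorm_comp_mul_deriv (hf : IncreasingBiLipschitz f g Kf Kg) (φ : ℝ → ℝ) (x : ℝ) :
    ‖φ (f x) * deriv f x‖ₑ = ENNReal.ofReal (deriv f x) * ‖φ (f x)‖ₑ := by
  rw [enorm_mul, Real.enorm_of_nonneg hf.monotone.deriv_nonneg, mul_comm]

theorem eLpNorm_one_comp_mul_deriv (hf : IncreasingBiLipschitz f g Kf Kg) (φ : ℝ → ℝ) :
    eLpNorm (fun x => φ (f x) * deriv f x) 1 volume = eLpNorm φ 1 volume := by
  simp only [eLpNorm_one_eq_lintegral_enorm, hf.enorm_comp_mul_deriv]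
  exact hf.lintegral_comp fun y => ‖φ y‖ₑ

theorem eLpNorm_two_comp_mul_deriv_le (hf : IncreasingBiLipschitz f g Kf Kg) (φ : ℝ → ℝ) :
    eLpNorm (fun x => φ (f x) * deriv f x) 2 volume
      ≤ eLpNormEssSup (deriv f) volume ^ (2⁻¹ : ℝ) * eLpNorm φ 2 volume := by
  refine eLpNorm_two_le_of_lintegral_sq_le ?_
  rw [← hf.lintegral_comp (fun y => ‖φ y‖ₑ ^ 2),
    ← lintegral_const_mul' _ _ hf.lipschitz.eLpNormEssSup_deriv_ne_top]
  refine lintegral_mono_ae ?_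
  filter_upwards [enorm_ae_le_eLpNormEssSup (deriv f) volume] with x hx
  rw [hf.enorm_comp_mul_deriv, mul_pow, sq, mul_assoc]
  gcongr
  rwa [← Real.enorm_of_nonneg hf.monotone.deriv_nonneg]

theorem eLpNorm_two_le_comp_mul_deriv (hf : IncreasingBiLipschitz f g Kf Kg) (φ : ℝ → ℝ) :
    eLpNorm φ 2 volume
      ≤ (Kg : ℝ≥0∞) ^ (2⁻¹ : ℝ) * eLpNorm (fun x => φ (f x) * deriv f x) 2 volume := by
  refine eLpNorm_two_le_of_lintegral_sq_le ?_
  rw [← hf.lintegral_comp (fun y => ‖φ y‖ₑ ^ 2), ← lintegral_const_mul' _ _ ENNReal.coe_ne_top]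
  refine lintegral_mono_ae ?_
  filter_upwards [hf.lipschitz.ae_differentiableAt] with x hx
  have hone : 1 ≤ (Kg : ℝ≥0∞) * ENNReal.ofReal (deriv f x) := by
    have hK : (Kg : ℝ≥0∞) ≠ 0 := ENNReal.coe_ne_zero.mpr hf.lipschitz_inv_pos.ne'
    calc 1 = (Kg : ℝ≥0∞) * (Kg : ℝ≥0∞)⁻¹ := (ENNReal.mul_inv_cancel hK ENNReal.coe_ne_top).symm
      _ ≤ Kg * ENNReal.ofReal (deriv f x) := by
        rw [← ENNReal.ofReal_coe_nnreal, ← ENNReal.ofReal_inv_of_pos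
          (NNReal.coe_pos.mpr hf.lipschitz_inv_pos)]
        gcongr
        exact hf.inv_le_deriv hx
  calc ENNReal.ofReal (deriv f x) * ‖φ (f x)‖ₑ ^ 2
      = 1 * (ENNReal.ofReal (deriv f x) * ‖φ (f x)‖ₑ ^ 2) := (one_mul _).symm
    _ ≤ (Kg * ENNReal.ofReal (deriv f x)) * (ENNReal.ofReal (deriv f x) * ‖φ (f x)‖ₑ ^ 2) := by
      gcongr
    _ = Kg * ‖φ (f x) * deriv f x‖ₑ ^ 2 := by
      rw [hf.enorm_comp_mul_deriv]; ring

theorem nrm_two_comp_mul_deriv_le (hf : IncreasingBiLipschitz f g Kf Kg) {C : ℝ}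
    (hC : √(nrm ⊤ (deriv f)) ≤ C) (φ : ℝ → ℝ) :
    nrm 2 (fun x => φ (f x) * deriv f x) ≤ C * nrm 2 φ := by
  have hC0 : 0 ≤ C := (Real.sqrt_nonneg _).trans hC
  refine ENNReal.toReal_le_mul_toReal hC0 ((hf.eLpNorm_two_comp_mul_deriv_le φ).trans ?_)
    fun htop => ?_
  · gcongr
    rw [← ENNReal.ofReal_toReal hf.lipschitz.eLpNormEssSup_deriv_ne_top,
      ENNReal.ofReal_rpow_of_nonneg ENNReal.toReal_nonneg (by norm_num), ← one_div,
      ← Real.sqrt_eq_rpow]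
    exact ENNReal.ofReal_le_ofReal (by rwa [nrm, eLpNorm_exponent_top] at hC)
  · -- `nrm` sends an infinite norm to `0`, so an infinite right-hand side has to force an
    -- infinite left-hand side
    have h := hf.eLpNorm_two_le_comp_mul_deriv φ
    rw [htop, top_le_iff, ENNReal.mul_eq_top] at h
    rcases h with ⟨-, h⟩ | ⟨h, -⟩
    · exact h
    · exact absurd h (ENNReal.rpow_ne_top_of_nonneg (by norm_num) ENNReal.coe_ne_top)

theorem nrm_two_deriv_comp_sub_le (hf : IncreasingBiLipschitz f g Kf Kg) {C : ℝ}
    (hC : √(nrm ⊤ (deriv f)) ≤ C) (φ₁ φ₂ : ℝ → ℝ) :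
    nrm 2 (fun x => deriv (fun ξ => φ₁ (f ξ)) x - deriv (fun ξ => φ₂ (f ξ)) x)
      ≤ C * nrm 2 (fun y => deriv φ₁ y - deriv φ₂ y) := by
  have hae : (fun x => deriv (fun ξ => φ₁ (f ξ)) x - deriv (fun ξ => φ₂ (f ξ)) x)
      =ᵐ[volume] fun x => (deriv φ₁ (f x) - deriv φ₂ (f x)) * deriv f x := by
    filter_upwards [hf.ae_deriv_pos_and_deriv_comp] with x hx
    rw [hx.2, hx.2, sub_mul]
  rw [nrm, eLpNorm_congr_ae hae]
  exact hf.nrm_two_comp_mul_deriv_le hC fun y => deriv φ₁ y - deriv φ₂ y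

theorem GfunT_act_ae_eq (hf : IncreasingBiLipschitz f g Kf Kg) (X₁ X₂ : LagQuad) :
    GfunT (tauOf (act X₁ f)) (tauOf (act X₂ f)) 0 (act X₁ f) (act X₂ f)
      =ᵐ[volume] fun x => GfunT (tauOf X₁) (tauOf X₂) 0 X₁ X₂ (f x) * deriv f x := by
  filter_upwards [hf.ae_deriv_pos_and_deriv_comp] with x hx
  exact GfunT_act hx.1 hx.2

theorem dmet_act_le (hf : IncreasingBiLipschitz f g Kf Kg) {C : ℝ} (hC : 1 ≤ C)
    (hfC : √(nrm ⊤ (deriv f)) ≤ C) (X₁ X₂ : LagQuad) :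
    dmet (act X₁ f) (act X₂ f) ≤ C * dmet X₁ X₂ := by
  have hsup (φ : ℝ → ℝ) : nrm ⊤ (fun x => φ (f x)) ≤ C * nrm ⊤ φ :=
    (hf.nrm_top_comp φ).trans_le (le_mul_of_one_le_left ENNReal.toReal_nonneg hC)
  have hG := hf.GfunT_act_ae_eq X₁ X₂
  have hG₁ : nrm 1 (GfunT (tauOf (act X₁ f)) (tauOf (act X₂ f)) 0 (act X₁ f) (act X₂ f))
      ≤ C * nrm 1 (GfunT (tauOf X₁) (tauOf X₂) 0 X₁ X₂) := by
    rw [nrm, eLpNorm_congr_ae hG, hf.eLpNorm_one_comp_mul_deriv]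
    exact le_mul_of_one_le_left ENNReal.toReal_nonneg hC
  have hG₂ : nrm 2 (GfunT (tauOf (act X₁ f)) (tauOf (act X₂ f)) 0 (act X₁ f) (act X₂ f))
      ≤ C * nrm 2 (GfunT (tauOf X₁) (tauOf X₂) 0 X₁ X₂) := by
    rw [nrm, eLpNorm_congr_ae hG]
    exact hf.nrm_two_comp_mul_deriv_le hfC _
  have hy := hsup fun y => X₁.y y - X₂.y y
  have hU := hsup fun y => X₁.U y - X₂.U y
  have hH := hsup fun y => X₁.H y - X₂.H y
  have hy' := hf.nrm_two_deriv_comp_sub_le hfC X₁.y X₂.y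
  have hU' := hf.nrm_two_deriv_comp_sub_le hfC X₁.U X₂.U
  simp only [dmet, ddT, act] at hG₁ hG₂ ⊢
  linarith

end IncreasingBiLipschitz

theorem lipschitzWith_of_bddLip_sub_id {φ : ℝ → ℝ} (hφ : bddLip fun x => φ x - x) :
    ∃ K, LipschitzWith K φ := by
  obtain ⟨-, K, hK⟩ := hφ
  exact ⟨K + 1, by simpa using hK.add LipschitzWith.id⟩

theorem inG.increasingBiLipschitz {f : ℝ → ℝ} (hf : inG f) :
    ∃ Kf Kg, IncreasingBiLipschitz f (invFun f) Kf Kg := by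
  obtain ⟨hbij, hsub, hsub_inv, -⟩ := hf
  obtain ⟨Kf, hKf⟩ := lipschitzWith_of_bddLip_sub_id hsub
  obtain ⟨Kg, hKg⟩ := lipschitzWith_of_bddLip_sub_id hsub_inv
  obtain ⟨⟨B, hB⟩, -⟩ := hsub
  exact ⟨Kf, Kg, leftInverse_invFun hbij.1, rightInverse_invFun hbij.2, hKf, hKg,
    .of_continuous_injective_of_bounded_sub_id hKf.continuous hbij.1 hB⟩

theorem statement10_general
    (XA XB : LagQuad)
    (f h : ℝ → ℝ) (hf : inG f)
    (C : ℝ) (hC : 1 ≤ C) (hfC : Real.sqrt (nrm ⊤ (deriv f)) ≤ C) :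
    dmet (act XA f) (act XB h) ≤
      C * dmet XA (act XB (h ∘ Function.invFun f)) := by
  obtain ⟨Kf, Kg, hf⟩ := hf.increasingBiLipschitz
  have hrelabel : act XB h = act (act XB (h ∘ invFun f)) f := by
    simp only [act, comp_apply, hf.leftInverse _]
  rw [hrelabel]
  exact hf.dmet_act_le hC hfC XA _

/-- for `X_A, X_B ∈ F`, `f, h ∈ G`, `w = h ∘ f⁻¹` and `C ≥ 1` with
`‖f'‖_{L∞}^{1/2} ≤ C`, one has `d(X_A • f, X_B • h) ≤ C·d(X_A, X_B • w)`. -/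
theorem statement10 (α : ℝ) (hα : α ∈ Set.Icc (0 : ℝ) 1)
    (XA XB : LagQuad) (hA : inF α XA) (hB : inF α XB)
    (f h : ℝ → ℝ) (hf : inG f) (hh : inG h)
    (C : ℝ) (hC : 1 ≤ C) (hfC : Real.sqrt (nrm ⊤ (deriv f)) ≤ C) :
    dmet (act XA f) (act XB h) ≤
      C * dmet XA (act XB (h ∘ Function.invFun f)) :=
  statement10_general XA XB f h hf C hC hfC
end

section
/- Let b ≥ 0 and let a : [0,∞) → [0,∞) be differentiable with a(0) + b = 1 and (a'(t))² ≤ a(t)·b for all t ≥ 0. Then a(t) + b ≥ e^{−t/2} for all t ≥ 0; equivalently, 1/(a(t) + b) ≤ e^{t/2}. -/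
/-! The bound `(a')² ≤ a b` forces `a' ≥ -√(ab) ≥ -(a + b)/2` (AM–GM), so `a + b` decays at
most like `e^{-t/2}`: the function `e^{t/2} (a(t) + b)` has nonnegative derivative and hence stays
above its initial value `1`. -/

open Real Set

lemma neg_half_add_le_of_sq_le_mul {x a b : ℝ} (hab : 0 ≤ a + b) (h : x ^ 2 ≤ a * b) :
    -((a + b) / 2) ≤ x := by
  have hsq : x ^ 2 ≤ ((a + b) / 2) ^ 2 := by nlinarith [sq_nonneg (a - b)]
  exact (abs_le_of_sq_le_sq' hsq (by linarith)).1

lemma monotoneOn_exp_mul_of_neg_mul_le_deriv {D : Set ℝ} (hD : Convex ℝ D) {f : ℝ → ℝ} {k : ℝ}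
    (hf : ∀ t ∈ D, DifferentiableAt ℝ f t) (h : ∀ t ∈ interior D, -(k * f t) ≤ deriv f t) :
    MonotoneOn (fun t => exp (k * t) * f t) D := by
  have hderiv : ∀ t ∈ D,
      HasDerivAt (fun t => exp (k * t) * f t) (exp (k * t) * (k * f t + deriv f t)) t := by
    intro t ht
    exact ((((hasDerivAt_id' t).const_mul k).exp).mul (hf t ht).hasDerivAt).congr_deriv
      (by ring)
  refine monotoneOn_of_deriv_nonneg hD (fun t ht => (hderiv t ht).continuousAt.continuousWithinAt)
    (fun t ht => (hderiv t (interior_subset ht)).differentiableAt.differentiableWithinAt)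
    fun t ht => ?_
  rw [(hderiv t (interior_subset ht)).deriv]
  exact mul_nonneg (exp_pos _).le (by linarith [h t ht])

/-- if `b ≥ 0`, `a : [0,∞) → [0,∞)` is differentiable with `a(0) + b = 1`
and `(a'(t))² ≤ a(t)·b` for all `t ≥ 0`, then `a(t) + b ≥ e^{−t/2}` for all `t ≥ 0`;
equivalently `1/(a(t)+b) ≤ e^{t/2}`. -/
theorem statement12 (b : ℝ) (hb : 0 ≤ b) (a : ℝ → ℝ)
    (ha : ∀ t, 0 ≤ t → 0 ≤ a t)
    (hdiff : ∀ t, 0 ≤ t → DifferentiableAt ℝ a t)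
    (hinit : a 0 + b = 1)
    (hode : ∀ t, 0 ≤ t → (deriv a t) ^ 2 ≤ a t * b) :
    ∀ t, 0 ≤ t → Real.exp (-t / 2) ≤ a t + b ∧ 1 / (a t + b) ≤ Real.exp (t / 2) := by
  have hmono : MonotoneOn (fun t => exp (1 / 2 * t) * (a t + b)) (Ici 0) := by
    refine monotoneOn_exp_mul_of_neg_mul_le_deriv (convex_Ici 0)
      (fun t ht => (hdiff t ht).add_const b) fun t ht => ?_
    rw [interior_Ici] at ht
    rw [deriv_add_const]
    have := neg_half_add_le_of_sq_le_mul (add_nonneg (ha t ht.le) hb) (hode t ht.le)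
    linarith
  intro t ht
  have hgrowth : 1 ≤ exp (t / 2) * (a t + b) := by
    simpa [hinit, div_eq_inv_mul] using hmono self_mem_Ici ht ht
  have hpos : 0 < a t + b := pos_of_mul_pos_right (one_pos.trans_le hgrowth) (exp_pos _).le
  constructor
  · rw [neg_div, exp_neg, inv_le_iff_one_le_mul₀' (exp_pos _)]
    exact hgrowth
  · rw [div_le_iff₀ hpos]
    exact hgrowth
end

section
/- Let M > 0. Let y_A, y_B : ℝ → ℝ be continuous, nondecreasing and surjective, let U_A, U_B : ℝ → ℝ be bounded, and let u_A, u_B : ℝ → ℝ satisfy u_A(y_A(ξ)) = U_A(ξ) and u_B(y_B(ξ)) = U_B(ξ) for all ξ ∈ ℝ. Assume u_B is locally absolutely continuous with ∫_ℝ u_B'(x)² dx ≤ M. Then for every x ∈ ℝ, |u_A(x) − u_B(x)| ≤ ‖U_A − U_B‖_{L∞} + √(M·‖y_A − y_B‖_{L∞}). -/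
/-!
Choose `ξ` with `y_A ξ = x`. Then `u_A x - u_B x = (U_A ξ - U_B ξ) + (u_B (y_B ξ) - u_B (y_A ξ))`,
and the second term is controlled by the ½-Hölder continuity of `u_B`: by Cauchy–Schwarz,
`|u_B b - u_B a| ≤ (∫ u_B'²)^{1/2} |b - a|^{1/2}`, while `|y_B ξ - y_A ξ| ≤ ‖y_A - y_B‖_∞`.
-/

open MeasureTheory Filter Set

theorem abs_integral_le_sqrt_integral_sq_mul_sqrt {α : Type*} [MeasurableSpace α]
    {μ : Measure α} [IsFiniteMeasure μ] {f : α → ℝ} (hf : MemLp f 2 μ) :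
    |∫ x, f x ∂μ| ≤ √(∫ x, f x ^ 2 ∂μ) * √(μ.real univ) := by
  have holder := integral_mul_le_Lp_mul_Lq_of_nonneg Real.HolderConjugate.two_two
    (μ := μ) (f := fun x => |f x|) (g := fun _ => (1 : ℝ))
    (Eventually.of_forall fun _ => abs_nonneg _) (Eventually.of_forall fun _ => zero_le_one)
    (by rw [ENNReal.ofReal_ofNat]; exact hf.abs) (by rw [ENNReal.ofReal_ofNat]; exact memLp_const 1)
  simp only [mul_one, one_pow, integral_const, smul_eq_mul, Real.rpow_two, sq_abs,
    ← Real.sqrt_eq_rpow] at holder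
  exact abs_integral_le_integral_abs.trans holder

theorem abs_intervalIntegral_le_sqrt_integral_sq_mul_sqrt {f : ℝ → ℝ} (hf : MemLp f 2)
    (a b : ℝ) : |∫ s in a..b, f s| ≤ √(∫ x, f x ^ 2) * √|b - a| := by
  wlog hab : a ≤ b generalizing a b
  · simpa [intervalIntegral.integral_symm a b, abs_sub_comm] using this b a (le_of_not_ge hab)
  rw [intervalIntegral.integral_of_le hab, abs_of_nonneg (sub_nonneg.2 hab)]
  calc |∫ x in Ioc a b, f x| ≤ √(∫ x in Ioc a b, f x ^ 2) * √(volume.real (Ioc a b)) := by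
        simpa using abs_integral_le_sqrt_integral_sq_mul_sqrt (hf.restrict (Ioc a b))
    _ ≤ √(∫ x, f x ^ 2) * √(b - a) := by
        rw [Real.volume_real_Ioc_of_le hab]
        gcongr
        · exact Eventually.of_forall fun _ => sq_nonneg _
        · exact hf.integrable_sq
        · exact Measure.restrict_le_self

theorem abs_sub_le_sqrt_mul_of_integral_sq_le {u g : ℝ → ℝ} {M δ : ℝ}
    (hu : ∀ x y, u y - u x = ∫ s in x..y, g s) (hg : MemLp g 2) (hM : ∫ x, g x ^ 2 ≤ M)
    {x y : ℝ} (hxy : |y - x| ≤ δ) : |u y - u x| ≤ √(M * δ) := by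
  have hM₀ : 0 ≤ M := (integral_nonneg fun _ => sq_nonneg _).trans hM
  calc |u y - u x| ≤ √(∫ x, g x ^ 2) * √|y - x| := by
        rw [hu]; exact abs_intervalIntegral_le_sqrt_integral_sq_mul_sqrt hg x y
    _ ≤ √M * √δ := by gcongr
    _ = √(M * δ) := (Real.sqrt_mul hM₀ δ).symm

theorem statement17_general (M : ℝ)
    (yA yB : ℝ → ℝ)
    (hyAs : Function.Surjective yA)
    (UA UB : ℝ → ℝ)
    (uA uB : ℝ → ℝ)
    (huA : ∀ ξ, uA (yA ξ) = UA ξ) (huB : ∀ ξ, uB (yB ξ) = UB ξ)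
    (huBac : ∀ x y : ℝ, uB y - uB x = ∫ s in x..y, deriv uB s)
    (huBint : Integrable (fun x => (deriv uB x) ^ 2))
    (huBM : ∫ x : ℝ, (deriv uB x) ^ 2 ≤ M)
    (CU Cy : ℝ)
    (hCU : ∀ ξ, |UA ξ - UB ξ| ≤ CU) (hCy : ∀ ξ, |yA ξ - yB ξ| ≤ Cy) :
    ∀ x : ℝ, |uA x - uB x| ≤ CU + Real.sqrt (M * Cy) := by
  intro x
  obtain ⟨ξ, rfl⟩ := hyAs x
  have hderiv : MemLp (deriv uB) 2 :=
    (memLp_two_iff_integrable_sq (measurable_deriv uB).aestronglyMeasurable).2 huBint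
  calc |uA (yA ξ) - uB (yA ξ)| = |(UA ξ - UB ξ) + (uB (yB ξ) - uB (yA ξ))| := by
        rw [huA, ← huB]; ring_nf
    _ ≤ |UA ξ - UB ξ| + |uB (yB ξ) - uB (yA ξ)| := abs_add_le _ _
    _ ≤ CU + √(M * Cy) := add_le_add (hCU ξ) <|
        abs_sub_le_sqrt_mul_of_integral_sq_le huBac hderiv huBM (by rw [abs_sub_comm]; exact hCy ξ)

/-- if `y_A, y_B` are continuous nondecreasing surjections, `U_A, U_B` are
bounded, `u_A∘y_A = U_A`, `u_B∘y_B = U_B`, `u_B` is locally absolutely continuous with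
`∫ u_B'² ≤ M`, then for all `x`,
`|u_A(x) − u_B(x)| ≤ ‖U_A − U_B‖_{L∞} + √(M·‖y_A − y_B‖_{L∞})`
(the sup-norms being expressed via arbitrary upper bounds). -/
theorem statement17 (M : ℝ) (hM : 0 < M)
    (yA yB : ℝ → ℝ)
    (hyAc : Continuous yA) (hyAm : Monotone yA) (hyAs : Function.Surjective yA)
    (hyBc : Continuous yB) (hyBm : Monotone yB) (hyBs : Function.Surjective yB)
    (UA UB : ℝ → ℝ)
    (hUA : ∃ C, ∀ ξ, |UA ξ| ≤ C) (hUB : ∃ C, ∀ ξ, |UB ξ| ≤ C)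
    (uA uB : ℝ → ℝ)
    (huA : ∀ ξ, uA (yA ξ) = UA ξ) (huB : ∀ ξ, uB (yB ξ) = UB ξ)
    (huBac : ∀ x y : ℝ, uB y - uB x = ∫ s in x..y, deriv uB s)
    (huBint : Integrable (fun x => (deriv uB x) ^ 2))
    (huBM : ∫ x : ℝ, (deriv uB x) ^ 2 ≤ M)
    (CU Cy : ℝ)
    (hCU : ∀ ξ, |UA ξ - UB ξ| ≤ CU) (hCy : ∀ ξ, |yA ξ - yB ξ| ≤ Cy) :
    ∀ x : ℝ, |uA x - uB x| ≤ CU + Real.sqrt (M * Cy) :=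
  statement17_general M yA yB hyAs UA UB uA uB huA huB huBac huBint huBM CU Cy hCU hCy
end

section
/- Let f ∈ C_c^∞(ℝ), let y_A : ℝ → ℝ be nondecreasing and 1-Lipschitz, and let V_A, V_B : ℝ → ℝ be nondecreasing Lipschitz functions with V_A', V_B' ∈ L¹(ℝ) and V_A(ξ), V_B(ξ) → 0 as ξ → −∞. Then |∫_ℝ f(y_A(ξ))·(V_A'(ξ) − V_B'(ξ)) dξ| ≤ ‖f'‖_{L¹(ℝ)}·‖V_A − V_B‖_{L∞(ℝ)}. -/
open MeasureTheory Filter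
open scoped ENNReal Topology

open Set
open scoped NNReal

noncomputable section

lemma absIntLe (g : ℝ → ℝ) (μ : MeasureTheory.Measure ℝ) : |∫ x, g x ∂μ| ≤ ∫ x, |g x| ∂μ := by
  simpa [Real.norm_eq_abs] using norm_integral_le_integral_norm (μ := μ) g

lemma integral_deriv_Iic {V : ℝ → ℝ} {K : ℝ≥0} (hVm : Monotone V) (hVL : LipschitzWith K V)
    (h0 : Tendsto V atBot (𝓝 (0:ℝ))) (hI : Integrable (deriv V)) :
    (∀ c, ∫ ξ in Set.Iic c, deriv V ξ = V c) ∧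
      Tendsto V atTop (𝓝 (∫ ξ, deriv V ξ)) := by
  have hVc : Continuous V := hVL.continuous
  have hS : ∀ x, hVm.stieltjesFunction x = V x := by
    intro x
    rw [hVm.stieltjesFunction_eq]
    exact rightLim_eq_of_tendsto ((hVc.tendsto x).mono_left nhdsWithin_le_nhds)
  set μ := hVm.stieltjesFunction.measure with hμ
  have hWm : Monotone (fun x => (K : ℝ) * x - V x) := by
    intro a b hab
    have h1 : |V a - V b| ≤ K * |a - b| := by
      have := hVL.dist_le_mul a b
      rwa [Real.dist_eq, Real.dist_eq] at this
    have h2 : |a - b| = b - a := by rw [abs_sub_comm, abs_of_nonneg (sub_nonneg.2 hab)]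
    rw [h2] at h1
    have h3 := abs_le.1 h1
    simp only
    linarith [h3.1, h3.2]
  have hWc : Continuous (fun x => (K : ℝ) * x - V x) :=
    (continuous_const.mul continuous_id).sub hVc
  have hSW : ∀ x, hWm.stieltjesFunction x = (K : ℝ) * x - V x := by
    intro x
    rw [hWm.stieltjesFunction_eq]
    exact rightLim_eq_of_tendsto ((hWc.tendsto x).mono_left nhdsWithin_le_nhds)
  have hsum : μ + hWm.stieltjesFunction.measure = (K : ℝ≥0∞) • volume := by
    refine Measure.ext_of_Ioc' _ _ (fun a b _ => ?_) fun a b hab => ?_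
    · simp [hμ, StieltjesFunction.measure_Ioc]
    simp only [hμ, Measure.add_apply, StieltjesFunction.measure_Ioc, hS, hSW, Measure.smul_apply,
      smul_eq_mul, Real.volume_Ioc]
    have h1 : (0:ℝ) ≤ V b - V a := sub_nonneg.2 (hVm hab.le)
    have h2 : (0:ℝ) ≤ ((K:ℝ) * b - V b) - ((K:ℝ) * a - V a) := sub_nonneg.2 (hWm hab.le)
    rw [← ENNReal.ofReal_add h1 h2, ← ENNReal.ofReal_coe_nnreal, ← ENNReal.ofReal_mul K.coe_nonneg]
    congr 1
    ring
  have hle : μ ≤ (K : ℝ≥0∞) • volume := hsum ▸ Measure.le_add_right le_rfl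
  have hac : μ ≪ volume := Measure.absolutelyContinuous_of_le_smul hle
  have hD := hVm.ae_hasDerivAt
  have hAE : deriv V =ᵐ[volume] fun x => (μ.rnDeriv volume x).toReal :=
    hD.mono fun x hx => hx.deriv
  have key : ∀ s : Set ℝ, MeasurableSet s → ∫ ξ in s, deriv V ξ = (μ s).toReal := by
    intro s hs
    rw [setIntegral_congr_ae hs (hAE.mono fun x hx _ => hx)]
    exact Measure.setIntegral_toReal_rnDeriv' hac hs
  have hV0 : ∀ c, 0 ≤ V c :=
    fun c => le_of_tendsto h0 (eventually_atBot.2 ⟨c, fun x hx => hVm hx⟩)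
  have hStendsto : Tendsto (hVm.stieltjesFunction : ℝ → ℝ) atBot (𝓝 0) :=
    (tendsto_congr hS).2 h0
  have hIic : ∀ c, ∫ ξ in Set.Iic c, deriv V ξ = V c := by
    intro c
    rw [key _ measurableSet_Iic, hμ, StieltjesFunction.measure_Iic _ hStendsto, hS, sub_zero,
      ENNReal.toReal_ofReal (hV0 c)]
  refine ⟨hIic, ?_⟩
  have h1 : Tendsto (fun c : ℝ => ∫ ξ in Set.Iic c, deriv V ξ) atTop
      (𝓝 (∫ ξ in ⋃ c : ℝ, Set.Iic c, deriv V ξ)) :=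
    tendsto_setIntegral_of_monotone (fun _ => measurableSet_Iic)
      (fun a b hab => Set.Iic_subset_Iic.2 hab) hI.integrableOn
  rw [Set.iUnion_Iic, setIntegral_univ] at h1
  exact h1.congr hIic

/-- for `f ∈ C_c^∞(ℝ)`, `y_A` nondecreasing and 1-Lipschitz, and `V_A, V_B`
nondecreasing Lipschitz with integrable derivatives and vanishing at `−∞`,
`|∫ f(y_A(ξ))·(V_A'(ξ) − V_B'(ξ)) dξ| ≤ ‖f'‖_{L¹}·‖V_A − V_B‖_{L∞}`. -/
theorem statement18 (f : ℝ → ℝ)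
    (hf : ContDiff ℝ (⊤ : ℕ∞) f) (hsupp : HasCompactSupport f)
    (yA : ℝ → ℝ) (hyAm : Monotone yA) (hyAL : LipschitzWith 1 yA)
    (VA VB : ℝ → ℝ)
    (hVAm : Monotone VA) (hVAL : ∃ K, LipschitzWith K VA)
    (hVBm : Monotone VB) (hVBL : ∃ K, LipschitzWith K VB)
    (hIA : Integrable (deriv VA)) (hIB : Integrable (deriv VB))
    (h0A : Tendsto VA atBot (𝓝 (0 : ℝ))) (h0B : Tendsto VB atBot (𝓝 (0 : ℝ))) :
    |∫ ξ : ℝ, f (yA ξ) * (deriv VA ξ - deriv VB ξ)| ≤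
      (∫ x : ℝ, |deriv f x|) * nrm ⊤ (fun ξ => VA ξ - VB ξ) := by
  obtain ⟨KA, hVALip⟩ := hVAL
  obtain ⟨KB, hVBLip⟩ := hVBL
  obtain ⟨keyA, htopA⟩ := integral_deriv_Iic hVAm hVALip h0A hIA
  obtain ⟨keyB, htopB⟩ := integral_deriv_Iic hVBm hVBLip h0B hIB
  set G : ℝ → ℝ := fun ξ => VA ξ - VB ξ with hGdef
  set M : ℝ := nrm ⊤ G with hMdef
  set h : ℝ → ℝ := fun ξ => deriv VA ξ - deriv VB ξ with hhdef
  have hh : Integrable h := hIA.sub hIB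
  have hMnonneg : 0 ≤ M := ENNReal.toReal_nonneg
  -- |V c| ≤ ∫ |deriv V|
  have hAbs : ∀ (V : ℝ → ℝ), Integrable (deriv V) →
      (∀ c, ∫ ξ in Set.Iic c, deriv V ξ = V c) → ∀ c, |V c| ≤ ∫ x, |deriv V x| := by
    intro V hI hkey c
    rw [← hkey c]
    calc |∫ ξ in Set.Iic c, deriv V ξ| ≤ ∫ ξ in Set.Iic c, |deriv V ξ| :=
          absIntLe _ _
      _ ≤ ∫ x, |deriv V x| :=
          setIntegral_le_integral hI.abs (Eventually.of_forall fun x => abs_nonneg _)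
  have hGc : Continuous G := hVALip.continuous.sub hVBLip.continuous
  -- pointwise bound by essSup
  have hfin : eLpNormEssSup G volume ≠ ∞ := by
    refine ((eLpNormEssSup_le_of_ae_bound
      (C := (∫ x, |deriv VA x|) + ∫ x, |deriv VB x|) ?_).trans_lt ENNReal.ofReal_lt_top).ne
    refine Eventually.of_forall fun c => ?_
    have h1 := hAbs VA hIA keyA c
    have h2 := hAbs VB hIB keyB c
    calc ‖G c‖ = |VA c - VB c| := rfl
      _ ≤ |VA c| + |VB c| := abs_sub _ _
      _ ≤ (∫ x, |deriv VA x|) + ∫ x, |deriv VB x| := add_le_add h1 h2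
  have hMb : ∀ c, |G c| ≤ M := by
    intro c
    by_contra hcon
    push_neg at hcon
    have hU : IsOpen {x | M < |G x|} := isOpen_lt continuous_const hGc.abs
    have hpos : 0 < volume {x | M < |G x|} := hU.measure_pos volume ⟨c, hcon⟩
    have hae : ∀ᵐ x, ¬ (M < |G x|) := by
      filter_upwards [ae_le_eLpNormEssSup (f := G) (μ := volume)] with x hx
      have h2 : |G x| ≤ M := by
        rw [hMdef, nrm, eLpNorm_exponent_top]
        have h3 := ENNReal.toReal_mono hfin
          (show ((‖G x‖₊ : ℝ≥0∞)) ≤ eLpNormEssSup G volume from hx)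
        simpa [Real.norm_eq_abs] using h3
      exact not_lt.2 h2
    have h0 : volume {x : ℝ | M < |G x|} = 0 := by
      have h1 := ae_iff.1 hae
      simpa using h1
    exact hpos.ne' h0
  have hLim : |(∫ ξ, deriv VA ξ) - ∫ ξ, deriv VB ξ| ≤ M := by
    have ht : Tendsto (fun c => |G c|) atTop
        (𝓝 |(∫ ξ, deriv VA ξ) - ∫ ξ, deriv VB ξ|) := (htopA.sub htopB).abs
    exact le_of_tendsto ht (Eventually.of_forall hMb)
  have hSmeas : ∀ t : ℝ, MeasurableSet {ξ : ℝ | yA ξ < t} :=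
    fun t => (isOpen_lt hyAL.continuous continuous_const).measurableSet
  -- bound on inner integral
  have hJ : ∀ t : ℝ, |∫ ξ in {ξ : ℝ | yA ξ < t}, h ξ| ≤ M := by
    intro t
    by_cases hne : {ξ : ℝ | yA ξ < t}.Nonempty
    · by_cases hbdd : BddAbove {ξ : ℝ | yA ξ < t}
      · set c := sSup {ξ : ℝ | yA ξ < t} with hc
        have hsub1 : Set.Iio c ⊆ {ξ : ℝ | yA ξ < t} := by
          intro x hx
          obtain ⟨s, hsS, hxs⟩ := exists_lt_of_lt_csSup hne hx
          exact lt_of_le_of_lt (hyAm hxs.le) hsS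
        have hsub2 : {ξ : ℝ | yA ξ < t} ⊆ Set.Iic c := fun x hx => le_csSup hbdd hx
        have hSae : {ξ : ℝ | yA ξ < t} =ᵐ[volume] Set.Iic c := by
          have hne' : ∀ᵐ x : ℝ, x ≠ c := by
            rw [ae_iff]
            simpa using Real.volume_singleton (x := c)
          filter_upwards [hne'] with x hx
          simp only [eq_iff_iff, Set.mem_Iic, Set.mem_setOf_eq]
          constructor
          · exact fun hxS => hsub2 hxS
          · intro hxc
            rcases lt_or_eq_of_le hxc with hlt | heq
            · exact hsub1 hlt
            · exact absurd heq hx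
        rw [setIntegral_congr_set hSae]
        have : ∫ ξ in Set.Iic c, h ξ = G c := by
          rw [hhdef]
          rw [integral_sub hIA.integrableOn hIB.integrableOn, keyA c, keyB c]
        rw [this]
        exact hMb c
      · have huniv : {ξ : ℝ | yA ξ < t} = Set.univ := by
          ext x
          simp only [Set.mem_univ, iff_true, Set.mem_setOf_eq]
          obtain ⟨y, hyS, hxy⟩ := not_bddAbove_iff.1 hbdd x
          exact lt_of_le_of_lt (hyAm hxy.le) hyS
        rw [huniv, setIntegral_univ]
        have : ∫ ξ, h ξ = (∫ ξ, deriv VA ξ) - ∫ ξ, deriv VB ξ := integral_sub hIA hIB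
        rw [this]
        exact hLim
    · have hempty : {ξ : ℝ | yA ξ < t} = ∅ := Set.not_nonempty_iff_eq_empty.1 hne
      rw [hempty]
      simpa using hMnonneg
  -- facts about f
  have hfc : Continuous f := hf.continuous
  have hf'c : Continuous (deriv f) := hf.continuous_deriv (by simp)
  have hf'supp : HasCompactSupport (deriv f) := hsupp.deriv
  have hf'int : Integrable (deriv f) := hf'c.integrable_of_hasCompactSupport hf'supp
  have hftop : Tendsto f atTop (𝓝 (0:ℝ)) := by
    obtain ⟨R, hR⟩ := hsupp.isCompact.isBounded.subset_closedBall 0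
    have : ∀ᶠ x : ℝ in atTop, f x = 0 := by
      filter_upwards [eventually_gt_atTop R] with x hx
      by_contra hfx
      have hmem : x ∈ Metric.closedBall (0:ℝ) R :=
        hR (subset_tsupport f (by simpa [Function.mem_support] using hfx))
      rw [Metric.mem_closedBall, Real.dist_eq, sub_zero] at hmem
      exact absurd (le_abs_self x |>.trans hmem) (not_le.2 hx)
    have heq : f =ᶠ[atTop] (fun _ => 0) := this
    exact Tendsto.congr' heq.symm tendsto_const_nhds
  have frep : ∀ a : ℝ, ∫ t in Set.Ioi a, deriv f t = -f a := by
    intro a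
    have := integral_Ioi_of_hasDerivAt_of_tendsto (f := f) (f' := deriv f) (a := a)
      hfc.continuousWithinAt
      (fun x _ => ((hf.differentiable (by simp)) x).hasDerivAt)
      hf'int.integrableOn hftop
    rw [this, zero_sub]
  -- Fubini setup
  set Φ : ℝ × ℝ → ℝ :=
    fun p => Set.indicator {q : ℝ × ℝ | yA q.1 < q.2} (fun q => deriv f q.2 * h q.1) p with hΦdef
  have hopen : IsOpen {q : ℝ × ℝ | yA q.1 < q.2} :=
    isOpen_lt (hyAL.continuous.comp continuous_fst) continuous_snd
  have hmeasΦ : Measurable Φ :=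
    Measurable.indicator
      (((hf'c.measurable).comp measurable_snd).mul
        (((measurable_deriv VA).sub (measurable_deriv VB)).comp measurable_fst))
      hopen.measurableSet
  have hΦint : Integrable Φ (volume.prod volume) := by
    refine Integrable.mono' (hh.abs.mul_prod hf'int.abs) hmeasΦ.aestronglyMeasurable ?_
    refine Eventually.of_forall fun p => ?_
    calc ‖Φ p‖ ≤ ‖deriv f p.2 * h p.1‖ := norm_indicator_le_norm_self _ p
      _ = |h p.1| * |deriv f p.2| := by rw [Real.norm_eq_abs, abs_mul, mul_comm]
  have hswap : (∫ ξ : ℝ, ∫ t : ℝ, Φ (ξ, t)) = ∫ t : ℝ, ∫ ξ : ℝ, Φ (ξ, t) :=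
    integral_integral_swap hΦint
  have hL : ∀ ξ : ℝ, f (yA ξ) * h ξ = -∫ t : ℝ, Φ (ξ, t) := by
    intro ξ
    have heq : (fun t => Φ (ξ, t)) = Set.indicator (Set.Ioi (yA ξ)) (fun t => deriv f t * h ξ) := by
      funext t
      by_cases hx : yA ξ < t <;> simp [hΦdef, Set.indicator, hx, Set.mem_Ioi]
    rw [heq, integral_indicator measurableSet_Ioi, integral_mul_const, frep]
    ring
  have hR : ∀ t : ℝ, (∫ ξ : ℝ, Φ (ξ, t)) = deriv f t * ∫ ξ in {ξ : ℝ | yA ξ < t}, h ξ := by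
    intro t
    have heq : (fun ξ => Φ (ξ, t)) = Set.indicator {ξ : ℝ | yA ξ < t} (fun ξ => deriv f t * h ξ) := by
      funext ξ
      by_cases hx : yA ξ < t <;> simp [hΦdef, Set.indicator, hx]
    rw [heq, integral_indicator (hSmeas t), integral_const_mul]
  calc |∫ ξ : ℝ, f (yA ξ) * (deriv VA ξ - deriv VB ξ)|
      = |∫ ξ : ℝ, -∫ t : ℝ, Φ (ξ, t)| := by
        congr 1
        exact integral_congr_ae (Eventually.of_forall hL)
    _ = |∫ ξ : ℝ, ∫ t : ℝ, Φ (ξ, t)| := by rw [integral_neg, abs_neg]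
    _ = |∫ t : ℝ, ∫ ξ : ℝ, Φ (ξ, t)| := by rw [hswap]
    _ = |∫ t : ℝ, deriv f t * ∫ ξ in {ξ : ℝ | yA ξ < t}, h ξ| := by
        congr 1
        exact integral_congr_ae (Eventually.of_forall hR)
    _ ≤ ∫ t : ℝ, |deriv f t * ∫ ξ in {ξ : ℝ | yA ξ < t}, h ξ| := absIntLe _ _
    _ ≤ ∫ t : ℝ, |deriv f t| * M := by
        refine integral_mono_of_nonneg (Eventually.of_forall fun t => abs_nonneg _)
          (hf'int.abs.mul_const M) (Eventually.of_forall fun t => ?_)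
        dsimp only
        rw [abs_mul]
        exact mul_le_mul_of_nonneg_left (hJ t) (abs_nonneg _)
    _ = (∫ x : ℝ, |deriv f x|) * M := integral_mul_const M _

end
end
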